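/- arXiv:2106.02661 — 5 statements merged into one kernel-verified Lean document; each statement's English description precedes it below -/
import Mathlib

section
/- Under the stated setting, if zer(A + S) ≠ ∅, then the sequence (x_n)_{n∈ℕ} generated by the iteration satisfies ∑_{n∈ℕ} ‖x_{n+1} − x_n‖² < +∞. -/
open Filter Topology RealInnerProductSpace

/-- A set-valued operator `A : H → 2^H` is monotone. -/
def IsMonotoneOp {H : Type*} [NormedAddCommGroup H] [InnerProductSpace ℝ H]
    (A : H → Set H) : Prop :=
  ∀ x y u v, u ∈ A x → v ∈ A y → 0 ≤ ⟪x - y, u - v⟫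

/-- A set-valued operator is maximally monotone if it is monotone and its graph is not
properly contained in the graph of another monotone operator. -/
def IsMaximalMonotone {H : Type*} [NormedAddCommGroup H] [InnerProductSpace ℝ H]
    (A : H → Set H) : Prop :=
  IsMonotoneOp A ∧
    ∀ A' : H → Set H, IsMonotoneOp A' → (∀ x, A x ⊆ A' x) → ∀ x, A' x ⊆ A x

/-- Theorem 1(i): `∑ ‖x_{n+1} − x_n‖² < ∞` for the iteration of Theorem 1. -/
theorem theorem1_summable
    {H : Type*} [NormedAddCommGroup H] [InnerProductSpace ℝ H] [CompleteSpace H]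
    (A : H → Set H) (hA : IsMaximalMonotone A)
    (S : H →L[ℝ] H) (hS : ContinuousLinearMap.adjoint S = -S)
    (ε α ρ : ℝ) (hε : ε ∈ Set.Ioo (0 : ℝ) 1) (hα : 0 < α) (hαρ : α ≤ ρ)
    (F : ℕ → H → H)
    (hFstrong : ∀ n x y, α * ‖x - y‖ ^ 2 ≤ ⟪x - y, F n x - F n y⟫)
    (hFlip : ∀ n x y, ‖F n x - F n y‖ ≤ ρ * ‖x - y‖)
    (lam : ℕ → ℝ) (hlam : ∀ n, lam n ∈ Set.Icc ε (2 - ε))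
    (x u estar fstar ustar y astar ystar : ℕ → H) (π : ℕ → ℝ)
    (hustar : ∀ n, ustar n = F n (u n) - S (u n) + estar n + fstar n)
    (hy : ∀ n, ustar n - F n (y n) ∈ A (y n))
    (hastar : ∀ n, astar n = ustar n - F n (y n))
    (hystar : ∀ n, ystar n = astar n + S (y n))
    (hπ : ∀ n, π n = ⟪x n, ystar n⟫ - ⟪y n, astar n⟫)
    (hupd_pos : ∀ n, 0 < π n →
      x (n + 1) = x n - ((lam n * π n) / ‖ystar n‖ ^ 2) • ystar n)
    (hupd_neg : ∀ n, ¬ 0 < π n → x (n + 1) = x n)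
    (hzer : ∃ z, -(S z) ∈ A z) :
    Summable (fun n => ‖x (n + 1) - x n‖ ^ 2) := by
  obtain ⟨z, hz⟩ := hzer
  obtain ⟨hεpos, hε1⟩ := hε
  set C : ℝ := (2 - ε) / ε with hC
  have hCpos : 0 < C := div_pos (by linarith) hεpos
  have hskew : ∀ v w : H, ⟪S v, w⟫ = -⟪v, S w⟫ := by
    intro v w
    have h := ContinuousLinearMap.adjoint_inner_right (𝕜 := ℝ) S v w
    rw [hS] at h
    simpa [inner_neg_right] using h.symm
  have hzkey : ∀ n, ⟪z, ystar n⟫ - ⟪y n, astar n⟫ ≤ 0 := by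
    intro n
    have hmem : astar n ∈ A (y n) := by rw [hastar]; exact hy n
    have hmono := hA.1 (y n) z (astar n) (-(S z)) hmem hz
    have hyz : ⟪y n, S z⟫ = -⟪z, S (y n)⟫ := by
      have h := hskew (y n) z
      have hc := real_inner_comm (S (y n)) z
      linarith
    have hzz : ⟪z, S z⟫ = (0 : ℝ) := by
      have h := hskew z z
      have hc := real_inner_comm (S z) z
      linarith
    rw [hystar, inner_add_right]
    simp only [sub_neg_eq_add, inner_sub_left, inner_add_right] at hmono
    linarith
  have key : ∀ n, ‖x (n + 1) - x n‖ ^ 2 ≤ C * (‖x n - z‖ ^ 2 - ‖x (n + 1) - z‖ ^ 2) := by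
    intro n
    by_cases hp : 0 < π n
    · obtain ⟨hL1, hL2⟩ := hlam n
      have hYne : ystar n ≠ 0 := by
        intro h
        have h1 := hzkey n
        have h2 := hπ n
        rw [h, inner_zero_right] at h1 h2
        linarith
      have hs : (0 : ℝ) < ‖ystar n‖ ^ 2 := pow_pos (norm_pos_iff.mpr hYne) 2
      set p := π n with hpdef
      set Y := ystar n with hYdef
      set s := ‖Y‖ ^ 2 with hsdef
      set L := lam n with hLdef
      set t : ℝ := L * p / s with htdef
      have ht0 : 0 < t := by
        apply div_pos (mul_pos (by linarith) hp) hs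
      have hts : t * s = L * p := by
        rw [htdef, div_mul_cancel₀ _ hs.ne']
      have hup := hupd_pos n hp
      have hxn : p ≤ ⟪x n - z, Y⟫ := by
        have h1 := hzkey n
        have h2 := hπ n
        rw [inner_sub_left]
        linarith
      have hnorm1 : ‖x (n + 1) - x n‖ ^ 2 = t ^ 2 * s := by
        rw [hup]
        have : x n - t • Y - x n = -(t • Y) := by abel
        rw [this, norm_neg, norm_smul, mul_pow, Real.norm_eq_abs, sq_abs]
      have hnorm2 : ‖x (n + 1) - z‖ ^ 2 = ‖x n - z‖ ^ 2 - 2 * (t * ⟪x n - z, Y⟫) + t ^ 2 * s := by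
        rw [hup]
        have : x n - t • Y - z = (x n - z) - t • Y := by abel
        rw [this, @norm_sub_sq_real, real_inner_smul_right, norm_smul, mul_pow,
          Real.norm_eq_abs, sq_abs]
      have hCkey : L ≤ C * (2 - L) := by
        have h1 : C * ε = 2 - ε := by
          rw [hC]; field_simp
        nlinarith
      rw [hnorm1, hnorm2]
      have hpq : t * p ≤ t * ⟪x n - z, Y⟫ := mul_le_mul_of_nonneg_left hxn ht0.le
      have h1 : t ^ 2 * s = t * (L * p) := by rw [sq, mul_assoc, hts]
      nlinarith [mul_le_mul_of_nonneg_left hCkey (mul_pos ht0 hp).le,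
        mul_le_mul_of_nonneg_left hpq hCpos.le, h1]
    · rw [hupd_neg n hp]
      simp
  have hbound : ∀ N, ∑ i ∈ Finset.range N, ‖x (i + 1) - x i‖ ^ 2 ≤ C * ‖x 0 - z‖ ^ 2 := by
    intro N
    calc ∑ i ∈ Finset.range N, ‖x (i + 1) - x i‖ ^ 2
        ≤ ∑ i ∈ Finset.range N, C * (‖x i - z‖ ^ 2 - ‖x (i + 1) - z‖ ^ 2) :=
          Finset.sum_le_sum fun i _ => key i
      _ = C * (‖x 0 - z‖ ^ 2 - ‖x N - z‖ ^ 2) := by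
          rw [← Finset.mul_sum, Finset.sum_range_sub' (fun i => ‖x i - z‖ ^ 2)]
      _ ≤ C * ‖x 0 - z‖ ^ 2 := by nlinarith [sq_nonneg ‖x N - z‖]
  exact summable_of_sum_range_le (fun n => sq_nonneg _) hbound
end

section
/- Under the stated setting, suppose that zer(A + S) ≠ ∅, that u_n − x_n → 0 strongly, that e_n* → 0 strongly, that (f_n*)_{n∈ℕ} is bounded, and that there exists δ ∈ (0,1) such that for every n ∈ ℕ: ⟨u_n − y_n, f_n*⟩ ≥ −δ⟨u_n − y_n, F_n u_n − F_n y_n⟩ and ⟨a_n* + S u_n − e_n*, f_n*⟩ ≤ δ‖a_n* + S u_n − e_n*‖². Then the sequence (x_n)_{n∈ℕ} generated by the iteration converges weakly to a point in zer(A + S). -/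
open Filter Topology RealInnerProductSpace

lemma exists_weak_cluster {H : Type*} [NormedAddCommGroup H] [InnerProductSpace ℝ H]
    [CompleteSpace H] (x : ℕ → H) (R : ℝ) (hR : ∀ n, ‖x n‖ ≤ R) (V : Ultrafilter ℕ) :
    ∃ p : H, ∀ w : H, Tendsto (fun n => ⟪x n, w⟫) (V : Filter ℕ) (nhds ⟪p, w⟫) := by
  set T : ℕ → WeakDual ℝ H := fun n => (InnerProductSpace.toDual ℝ H (x n) : H →L[ℝ] ℝ)
  have hmem : ∀ n, T n ∈ WeakDual.toStrongDual ⁻¹' Metric.closedBall 0 R := by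
    intro n
    simp only [Set.mem_preimage, Metric.mem_closedBall, dist_zero_right]
    exact le_trans (le_of_eq ((InnerProductSpace.toDual ℝ H).norm_map (x n))) (hR n)
  obtain ⟨φ, hφmem, hφ⟩ := (WeakDual.isCompact_closedBall (𝕜 := ℝ) (E := H) 0 R).ultrafilter_le_nhds
    (V.map T) (Filter.le_principal_iff.mpr (Filter.mem_map.mpr (Filter.univ_mem' hmem)))
  refine ⟨(InnerProductSpace.toDual ℝ H).symm (WeakDual.toStrongDual φ), fun w => ?_⟩
  have h2 := (tendsto_iff_forall_eval_tendsto_topDualPairing.mp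
    (hφ : Tendsto T (V : Filter ℕ) (𝓝 φ))) w
  have key : ∀ n, (topDualPairing ℝ H) (T n) w = ⟪x n, w⟫ := fun n => by
    simp [T, topDualPairing, InnerProductSpace.toDual_apply_apply]
  have keyp : (topDualPairing ℝ H) φ w = ⟪(InnerProductSpace.toDual ℝ H).symm (WeakDual.toStrongDual φ), w⟫ := by
    exact (InnerProductSpace.toDual_symm_apply (𝕜 := ℝ) (E := H)
      (x := w) (y := WeakDual.toStrongDual φ)).symm
  simpa [key, keyp] using h2

lemma tendsto_zero_of_sq_le {f g : ℕ → ℝ} (hf : ∀ n, 0 ≤ f n) (hle : ∀ n, f n ^ 2 ≤ g n)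
    (hg : Tendsto g atTop (𝓝 0)) : Tendsto f atTop (𝓝 0) := by
  have h1 : Tendsto (fun n => Real.sqrt (g n)) atTop (𝓝 0) := by
    have := (Real.continuous_sqrt.tendsto 0).comp hg
    simpa [Function.comp_def] using this
  refine tendsto_of_tendsto_of_tendsto_of_le_of_le tendsto_const_nhds h1 hf (fun n => ?_)
  calc f n = Real.sqrt (f n ^ 2) := (Real.sqrt_sq (hf n)).symm
    _ ≤ Real.sqrt (g n) := Real.sqrt_le_sqrt (hle n)

lemma exists_tendsto_of_antitone_nonneg {q : ℕ → ℝ} (h : ∀ n, q (n + 1) ≤ q n)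
    (h0 : ∀ n, 0 ≤ q n) : ∃ L, Tendsto q atTop (𝓝 L) :=
  ⟨_, tendsto_atTop_ciInf (antitone_nat_of_succ_le h)
    ⟨0, fun _ ⟨n, hn⟩ => hn ▸ h0 n⟩⟩

set_option maxHeartbeats 3000000 in
/-- Theorem 1(ii): under the stated conditions, `(x_n)` converges weakly to a zero of `A + S`. -/
theorem theorem1_weak_convergence
    {H : Type*} [NormedAddCommGroup H] [InnerProductSpace ℝ H] [CompleteSpace H]
    (A : H → Set H) (hA : IsMaximalMonotone A)
    (S : H →L[ℝ] H) (hS : ContinuousLinearMap.adjoint S = -S)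
    (ε α ρ : ℝ) (hε : ε ∈ Set.Ioo (0 : ℝ) 1) (hα : 0 < α) (hαρ : α ≤ ρ)
    (F : ℕ → H → H)
    (hFstrong : ∀ n x y, α * ‖x - y‖ ^ 2 ≤ ⟪x - y, F n x - F n y⟫)
    (hFlip : ∀ n x y, ‖F n x - F n y‖ ≤ ρ * ‖x - y‖)
    (lam : ℕ → ℝ) (hlam : ∀ n, lam n ∈ Set.Icc ε (2 - ε))
    (x u estar fstar ustar y astar ystar : ℕ → H) (π : ℕ → ℝ)
    (hustar : ∀ n, ustar n = F n (u n) - S (u n) + estar n + fstar n)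
    (hy : ∀ n, ustar n - F n (y n) ∈ A (y n))
    (hastar : ∀ n, astar n = ustar n - F n (y n))
    (hystar : ∀ n, ystar n = astar n + S (y n))
    (hπ : ∀ n, π n = ⟪x n, ystar n⟫ - ⟪y n, astar n⟫)
    (hupd_pos : ∀ n, 0 < π n →
      x (n + 1) = x n - ((lam n * π n) / ‖ystar n‖ ^ 2) • ystar n)
    (hupd_neg : ∀ n, ¬ 0 < π n → x (n + 1) = x n)
    (hzer : ∃ z, -(S z) ∈ A z)
    (hux : Filter.Tendsto (fun n => u n - x n) Filter.atTop (nhds 0))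
    (he : Filter.Tendsto estar Filter.atTop (nhds 0))
    (hf : Bornology.IsBounded (Set.range fstar))
    (hδ : ∃ δ ∈ Set.Ioo (0 : ℝ) 1, ∀ n,
      -(δ * ⟪u n - y n, F n (u n) - F n (y n)⟫) ≤ ⟪u n - y n, fstar n⟫ ∧
      ⟪astar n + S (u n) - estar n, fstar n⟫ ≤ δ * ‖astar n + S (u n) - estar n‖ ^ 2) :
    ∃ p, -(S p) ∈ A p ∧
      ∀ w : H, Filter.Tendsto (fun n => ⟪x n, w⟫) Filter.atTop (nhds ⟪p, w⟫) := by
  classical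
  obtain ⟨z₀, hz₀⟩ := hzer
  obtain ⟨δ, hδmem, hδ1⟩ := hδ
  obtain ⟨hδ0, hδlt⟩ := hδmem
  obtain ⟨hε0, hε1⟩ := hε
  -- skew-symmetry facts
  have hskew2 : ∀ a b : H, ⟪a, S b⟫ = -⟪b, S a⟫ := by
    intro a b
    have h1 := ContinuousLinearMap.adjoint_inner_left S b a
    rw [hS, ContinuousLinearMap.neg_apply, inner_neg_left] at h1
    rw [← h1, real_inner_comm (S a) b]
  have hskew : ∀ v : H, ⟪v, S v⟫ = 0 := by
    intro v
    have := hskew2 v v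
    linarith
  -- astar n ∈ A (y n)
  have hamem : ∀ n, astar n ∈ A (y n) := fun n => by rw [hastar]; exact hy n
  -- π n = ⟪x n - y n, ystar n⟫
  have hπeq : ∀ n, π n = ⟪x n - y n, ystar n⟫ := by
    intro n
    have h1 : ⟪y n, ystar n⟫ = ⟪y n, astar n⟫ := by
      rw [hystar, inner_add_right, hskew, add_zero]
    rw [inner_sub_left, hπ, h1]
  -- key halfspace inequality for zeros
  have hK1 : ∀ z, -(S z) ∈ A z → ∀ n, π n ≤ ⟪x n - z, ystar n⟫ := by
    intro z hz n
    have hmono := hA.1 (y n) z (astar n) (-(S z)) (hamem n) hz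
    have e1 : ⟪y n - z, astar n - -(S z)⟫
        = ⟪y n, astar n⟫ - ⟪z, astar n⟫ + ⟪y n, S z⟫ - ⟪z, S z⟫ := by
      rw [sub_neg_eq_add, inner_sub_left, inner_add_right, inner_add_right]
      ring
    have e2 : ⟪y n, S z⟫ = -⟪z, S (y n)⟫ := hskew2 _ _
    have e3 : ⟪z, S z⟫ = (0 : ℝ) := hskew z
    have e4 : ⟪x n - z, ystar n⟫
        = ⟪x n, ystar n⟫ - ⟪z, astar n⟫ - ⟪z, S (y n)⟫ := by
      simp only [inner_sub_left, hystar n, inner_add_right]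
      ring
    rw [e1, e2, e3] at hmono
    rw [hπ, e4]
    linarith
  -- the step-size sequence
  set d : ℕ → ℝ := fun n => if 0 < π n then π n / ‖ystar n‖ else 0 with hd_def
  have hd_nonneg : ∀ n, 0 ≤ d n := by
    intro n
    by_cases h : 0 < π n
    · simp only [hd_def, if_pos h]
      exact div_nonneg h.le (norm_nonneg _)
    · simp only [hd_def, if_neg h]
      exact le_rfl
  have hπle : ∀ n, π n ≤ d n * ‖ystar n‖ := by
    intro n
    by_cases h : 0 < π n
    · have hy0 : ystar n ≠ 0 := by
        intro h0
        have := hK1 z₀ hz₀ n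
        rw [h0, inner_zero_right] at this
        linarith
      have hN : (0 : ℝ) < ‖ystar n‖ := norm_pos_iff.mpr hy0
      simp only [hd_def, if_pos h]
      rw [div_mul_cancel₀ _ (ne_of_gt hN)]
    · simp only [hd_def, if_neg h]
      push_neg at h
      simpa using h
  -- Fejér monotonicity
  have hfe : ∀ z, -(S z) ∈ A z → ∀ n,
      ‖x (n + 1) - z‖ ^ 2 + (2 * lam n - lam n ^ 2) * d n ^ 2 ≤ ‖x n - z‖ ^ 2 := by
    intro z hz n
    obtain ⟨hl1, hl2⟩ := hlam n
    by_cases h : 0 < π n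
    · have hy0 : ystar n ≠ 0 := by
        intro h0
        have := hK1 z hz n
        rw [h0, inner_zero_right] at this
        linarith
      have hN : (0 : ℝ) < ‖ystar n‖ := norm_pos_iff.mpr hy0
      have hdn : d n = π n / ‖ystar n‖ := by simp only [hd_def, if_pos h]
      set t : ℝ := lam n * π n / ‖ystar n‖ ^ 2 with ht_def
      have ht0 : 0 ≤ t := div_nonneg (mul_nonneg (by linarith) h.le) (by positivity)
      have hx1 : x (n + 1) - z = (x n - z) - t • ystar n := by
        rw [hupd_pos n h]; abel
      have hexp : ‖x (n + 1) - z‖ ^ 2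
          = ‖x n - z‖ ^ 2 - 2 * (t * ⟪x n - z, ystar n⟫) + t ^ 2 * ‖ystar n‖ ^ 2 := by
        rw [hx1, norm_sub_sq_real, real_inner_smul_right, norm_smul]
        simp only [Real.norm_eq_abs, abs_of_nonneg ht0, mul_pow]
        try ring
      have hip : π n ≤ ⟪x n - z, ystar n⟫ := hK1 z hz n
      have h2 : t * π n ≤ t * ⟪x n - z, ystar n⟫ := mul_le_mul_of_nonneg_left hip ht0
      have halg : ‖x n - z‖ ^ 2 - 2 * (t * π n) + t ^ 2 * ‖ystar n‖ ^ 2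
          + (2 * lam n - lam n ^ 2) * d n ^ 2 = ‖x n - z‖ ^ 2 := by
        rw [hdn, ht_def]
        field_simp
        try ring
      rw [hexp]
      linarith
    · have hdn : d n = 0 := by simp only [hd_def, if_neg h]
      rw [hupd_neg n h, hdn]
      simp
  have hcoef : ∀ n, ε ^ 2 ≤ 2 * lam n - lam n ^ 2 := by
    intro n
    obtain ⟨hl1, hl2⟩ := hlam n
    nlinarith [mul_nonneg (sub_nonneg.mpr hl1) (sub_nonneg.mpr hl2)]
  have hfe2 : ∀ z, -(S z) ∈ A z → ∀ n, ‖x (n + 1) - z‖ ^ 2 ≤ ‖x n - z‖ ^ 2 := by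
    intro z hz n
    have h1 := hfe z hz n
    have h2 := hcoef n
    nlinarith [sq_nonneg (d n), sq_nonneg ε]
  -- limit of ‖x n - z‖² exists for z ∈ Z
  have limQ : ∀ z, -(S z) ∈ A z → ∃ L, Tendsto (fun n => ‖x n - z‖ ^ 2) atTop (𝓝 L) :=
    fun z hz => exists_tendsto_of_antitone_nonneg (hfe2 z hz) (fun n => sq_nonneg _)
  -- d → 0
  obtain ⟨L₀, hL₀⟩ := limQ z₀ hz₀
  have hd0 : Tendsto d atTop (𝓝 0) := by
    apply tendsto_zero_of_sq_le hd_nonneg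
      (g := fun n => (‖x n - z₀‖ ^ 2 - ‖x (n + 1) - z₀‖ ^ 2) / ε ^ 2)
    · intro n
      have h1 := hfe z₀ hz₀ n
      have h2 := hcoef n
      have h3 : ε ^ 2 * d n ^ 2 ≤ ‖x n - z₀‖ ^ 2 - ‖x (n + 1) - z₀‖ ^ 2 := by
        nlinarith [sq_nonneg (d n)]
      rw [le_div_iff₀ (by positivity)]
      linarith
    · have h1 : Tendsto (fun n => ‖x (n + 1) - z₀‖ ^ 2) atTop (𝓝 L₀) :=
        hL₀.comp (tendsto_add_atTop_nat 1)
      have := (hL₀.sub h1).div_const (ε ^ 2)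
      simpa using this
  -- boundedness of x
  have hxanti : ∀ m n, m ≤ n → ‖x n - z₀‖ ^ 2 ≤ ‖x m - z₀‖ ^ 2 :=
    fun m n h => antitone_nat_of_succ_le (f := fun k => ‖x k - z₀‖ ^ 2) (hfe2 z₀ hz₀) h
  set R : ℝ := ‖x 0 - z₀‖ + ‖z₀‖ with hR_def
  have hxR : ∀ n, ‖x n‖ ≤ R := by
    intro n
    have h1 : ‖x n - z₀‖ ^ 2 ≤ ‖x 0 - z₀‖ ^ 2 := hxanti 0 n (Nat.zero_le n)
    have h2 : ‖x n - z₀‖ ≤ ‖x 0 - z₀‖ := by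
      nlinarith [norm_nonneg (x n - z₀), norm_nonneg (x 0 - z₀)]
    calc ‖x n‖ = ‖x n - z₀ + z₀‖ := by rw [sub_add_cancel]
      _ ≤ ‖x n - z₀‖ + ‖z₀‖ := norm_add_le _ _
      _ ≤ R := by rw [hR_def]; linarith
  -- asymptotic quantities
  set tn : ℕ → ℝ := fun n => ‖u n - y n‖ with htn_def
  set en : ℕ → ℝ := fun n => ‖estar n‖ with hen_def
  set sx : ℕ → ℝ := fun n => ‖x n - u n‖ with hsx_def
  have htn_nonneg : ∀ n, 0 ≤ tn n := fun n => norm_nonneg _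
  have hδ1' : (0 : ℝ) < 1 - δ := by linarith
  have hρ0 : (0 : ℝ) < ρ := lt_of_lt_of_le hα hαρ
  -- w identity
  have hw_id : ∀ n, astar n + S (u n) - estar n = (F n (u n) - F n (y n)) + fstar n := by
    intro n
    rw [hastar, hustar]
    abel
  have hwb : ∀ n, ‖(F n (u n) - F n (y n)) + fstar n‖ ≤ ρ / (1 - δ) * tn n := by
    intro n
    have h2 := (hδ1 n).2
    rw [hw_id n] at h2
    have hid : ⟪(F n (u n) - F n (y n)) + fstar n, F n (u n) - F n (y n)⟫
        + ⟪(F n (u n) - F n (y n)) + fstar n, fstar n⟫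
        = ‖(F n (u n) - F n (y n)) + fstar n‖ ^ 2 := by
      rw [← inner_add_right, real_inner_self_eq_norm_sq]
    have hcs : ⟪(F n (u n) - F n (y n)) + fstar n, F n (u n) - F n (y n)⟫
        ≤ ‖(F n (u n) - F n (y n)) + fstar n‖ * (ρ * tn n) := by
      calc ⟪(F n (u n) - F n (y n)) + fstar n, F n (u n) - F n (y n)⟫
          ≤ ‖(F n (u n) - F n (y n)) + fstar n‖ * ‖F n (u n) - F n (y n)‖ :=
            real_inner_le_norm _ _
        _ ≤ ‖(F n (u n) - F n (y n)) + fstar n‖ * (ρ * tn n) :=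
            mul_le_mul_of_nonneg_left (hFlip n (u n) (y n)) (norm_nonneg _)
    have h5 : (1 - δ) * ‖(F n (u n) - F n (y n)) + fstar n‖ ^ 2
        ≤ ‖(F n (u n) - F n (y n)) + fstar n‖ * (ρ * tn n) := by nlinarith
    rcases eq_or_lt_of_le (norm_nonneg ((F n (u n) - F n (y n)) + fstar n)) with hw0 | hw0
    · rw [← hw0]
      positivity
    · have h6 : (1 - δ) * ‖(F n (u n) - F n (y n)) + fstar n‖ ≤ ρ * tn n := by
        have := mul_le_mul_of_nonneg_right h5 (le_of_lt (inv_pos.mpr hw0))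
        calc (1 - δ) * ‖(F n (u n) - F n (y n)) + fstar n‖
            = (1 - δ) * ‖(F n (u n) - F n (y n)) + fstar n‖ ^ 2 * ‖(F n (u n) - F n (y n)) + fstar n‖⁻¹ := by
              field_simp
              try ring
          _ ≤ ‖(F n (u n) - F n (y n)) + fstar n‖ * (ρ * tn n) * ‖(F n (u n) - F n (y n)) + fstar n‖⁻¹ := this
          _ = ρ * tn n := by
              field_simp
              try ring
      rw [div_mul_eq_mul_div, le_div_iff₀ hδ1']
      linarith
  have hfb : ∀ n, ‖fstar n‖ ≤ (ρ / (1 - δ) + ρ) * tn n := by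
    intro n
    have h1 : fstar n = ((F n (u n) - F n (y n)) + fstar n) - (F n (u n) - F n (y n)) := by abel
    calc ‖fstar n‖ = ‖((F n (u n) - F n (y n)) + fstar n) - (F n (u n) - F n (y n))‖ := by rw [← h1]
      _ ≤ ‖(F n (u n) - F n (y n)) + fstar n‖ + ‖F n (u n) - F n (y n)‖ := norm_sub_le _ _
      _ ≤ ρ / (1 - δ) * tn n + ρ * tn n := add_le_add (hwb n) (hFlip n (u n) (y n))
      _ = (ρ / (1 - δ) + ρ) * tn n := by ring
  set C₁ : ℝ := ρ + ‖S‖ + (ρ / (1 - δ) + ρ) with hC₁_def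
  have hC₁0 : 0 ≤ C₁ := by
    have := norm_nonneg S
    have h2 : 0 ≤ ρ / (1 - δ) := by positivity
    rw [hC₁_def]
    linarith
  have hyid : ∀ n, ystar n = (F n (u n) - F n (y n)) + fstar n + estar n - S (u n - y n) := by
    intro n
    rw [hystar, hastar, hustar, map_sub]
    abel
  have hyb : ∀ n, ‖ystar n‖ ≤ C₁ * tn n + en n := by
    intro n
    rw [hyid n]
    have h1 : ‖S (u n - y n)‖ ≤ ‖S‖ * tn n := S.le_opNorm _
    calc ‖(F n (u n) - F n (y n)) + fstar n + estar n - S (u n - y n)‖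
        ≤ ‖(F n (u n) - F n (y n)) + fstar n + estar n‖ + ‖S (u n - y n)‖ := norm_sub_le _ _
      _ ≤ ‖(F n (u n) - F n (y n)) + fstar n‖ + ‖estar n‖ + ‖S (u n - y n)‖ := by
          have := norm_add_le ((F n (u n) - F n (y n)) + fstar n) (estar n)
          linarith
      _ ≤ ρ / (1 - δ) * tn n + en n + ‖S‖ * tn n := by
          have := hwb n
          simp only [hen_def]
          linarith
      _ ≤ C₁ * tn n + en n := by
          have h3 : ρ / (1 - δ) + ‖S‖ ≤ C₁ := by
            rw [hC₁_def]
            have h4 : 0 ≤ ρ / (1 - δ) := by positivity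
            linarith
          nlinarith [htn_nonneg n]
  have hlow : ∀ n, (1 - δ) * α * tn n ^ 2 ≤ ⟪u n - y n, ystar n⟫ + en n * tn n := by
    intro n
    have h1 : ⟪u n - y n, ystar n⟫
        = ⟪u n - y n, F n (u n) - F n (y n)⟫ + ⟪u n - y n, fstar n⟫
          + ⟪u n - y n, estar n⟫ - ⟪u n - y n, S (u n - y n)⟫ := by
      rw [hyid n]
      simp only [inner_add_right, inner_sub_right]
      try ring
    have h2 : ⟪u n - y n, S (u n - y n)⟫ = (0 : ℝ) := hskew _
    have h3 := (hδ1 n).1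
    have h4 := hFstrong n (u n) (y n)
    have h5 : -(en n * tn n) ≤ ⟪u n - y n, estar n⟫ := by
      have h6 := (abs_le.mp (abs_real_inner_le_norm (u n - y n) (estar n))).1
      have h7 : ‖u n - y n‖ * ‖estar n‖ = en n * tn n := by
        simp only [hen_def, htn_def]
        ring
      linarith [h6, h7.symm ▸ h6]
    have h8 : (1 - δ) * (α * tn n ^ 2) ≤ (1 - δ) * ⟪u n - y n, F n (u n) - F n (y n)⟫ :=
      mul_le_mul_of_nonneg_left h4 (le_of_lt hδ1')
    rw [h1, h2]
    simp only [htn_def] at h8 ⊢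
    nlinarith
  have hmain : ∀ n, (1 - δ) * α * tn n ^ 2
      ≤ ((d n + sx n) * C₁ + en n) * tn n + (d n + sx n) * en n := by
    intro n
    have h1 : ⟪u n - y n, ystar n⟫ = ⟪u n - x n, ystar n⟫ + ⟪x n - y n, ystar n⟫ := by
      rw [← inner_add_left]
      congr 1
      abel
    have h2 : ⟪u n - x n, ystar n⟫ ≤ sx n * ‖ystar n‖ := by
      calc ⟪u n - x n, ystar n⟫ ≤ ‖u n - x n‖ * ‖ystar n‖ := real_inner_le_norm _ _
        _ = sx n * ‖ystar n‖ := by rw [hsx_def]; simp only [norm_sub_rev (u n) (x n)]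
    have h3 : ⟪x n - y n, ystar n⟫ ≤ d n * ‖ystar n‖ := by
      rw [← hπeq n]
      exact hπle n
    have h4 : (d n + sx n) * ‖ystar n‖ ≤ (d n + sx n) * (C₁ * tn n + en n) :=
      mul_le_mul_of_nonneg_left (hyb n) (add_nonneg (hd_nonneg n) (norm_nonneg _))
    have h5 := hlow n
    have h6 : ⟪u n - y n, ystar n⟫ ≤ (d n + sx n) * (C₁ * tn n + en n) := by
      calc ⟪u n - y n, ystar n⟫ ≤ sx n * ‖ystar n‖ + d n * ‖ystar n‖ := by
            rw [h1]; exact add_le_add h2 h3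
        _ = (d n + sx n) * ‖ystar n‖ := by ring
        _ ≤ (d n + sx n) * (C₁ * tn n + en n) := h4
    have h7 : (d n + sx n) * (C₁ * tn n + en n) + en n * tn n
        = ((d n + sx n) * C₁ + en n) * tn n + (d n + sx n) * en n := by ring
    linarith
  -- limits of the auxiliary sequences
  have hen0 : Tendsto en atTop (𝓝 0) := by
    simpa [hen_def] using he.norm
  have hsx0 : Tendsto sx atTop (𝓝 0) := by
    have h1 : Tendsto (fun n => ‖u n - x n‖) atTop (𝓝 0) := by simpa using hux.norm
    have h2 : sx = fun n => ‖u n - x n‖ := funext fun n => norm_sub_rev _ _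
    rw [h2]
    exact h1
  have htn0 : Tendsto tn atTop (𝓝 0) := by
    have hc0 : (0:ℝ) < (1 - δ) * α := mul_pos hδ1' hα
    have hsq : ∀ n, tn n ^ 2 ≤
        (((d n + sx n) * C₁ + en n) ^ 2 + 2 * ((1 - δ) * α) * ((d n + sx n) * en n))
          / ((1 - δ) * α) ^ 2 := by
      intro n
      have h1 := hmain n
      rw [le_div_iff₀ (pow_pos hc0 2)]
      nlinarith [sq_nonneg (((1 - δ) * α) * tn n - ((d n + sx n) * C₁ + en n)),
        mul_le_mul_of_nonneg_left h1 (le_of_lt hc0)]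
    have hβ0 : Tendsto (fun n => (d n + sx n) * C₁ + en n) atTop (𝓝 0) := by
      have := ((hd0.add hsx0).mul_const C₁).add hen0
      simpa using this
    have hγ0 : Tendsto (fun n => (d n + sx n) * en n) atTop (𝓝 0) := by
      have := (hd0.add hsx0).mul hen0
      simpa using this
    have hg0 : Tendsto (fun n =>
        (((d n + sx n) * C₁ + en n) ^ 2 + 2 * ((1 - δ) * α) * ((d n + sx n) * en n))
          / ((1 - δ) * α) ^ 2) atTop (𝓝 0) := by
      have h1 := ((hβ0.mul hβ0).add (hγ0.const_mul (2 * ((1 - δ) * α)))).div_const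
        (((1 - δ) * α) ^ 2)
      simp only [mul_zero, zero_mul, add_zero, zero_add, zero_div] at h1
      convert h1 using 2 with n
      ring
    exact tendsto_zero_of_sq_le htn_nonneg hsq hg0
  have huy0 : Tendsto (fun n => u n - y n) atTop (𝓝 0) :=
    tendsto_zero_iff_norm_tendsto_zero.mpr htn0
  have hystar0 : Tendsto ystar atTop (𝓝 0) := by
    refine squeeze_zero_norm hyb ?_
    have := (htn0.const_mul C₁).add hen0
    simpa using this
  have hyx0 : Tendsto (fun n => y n - x n) atTop (𝓝 0) := by
    have h1 : Tendsto (fun n => (u n - x n) - (u n - y n)) atTop (𝓝 0) := by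
      simpa using hux.sub huy0
    have h2 : (fun n => (u n - x n) - (u n - y n)) = fun n => y n - x n :=
      funext fun n => by abel
    rwa [h2] at h1
  obtain ⟨My, hMy⟩ : ∃ M, ∀ n, ‖y n‖ ≤ M := by
    obtain ⟨M₀, hM₀⟩ := (hyx0.norm.bddAbove_range)
    refine ⟨M₀ + R, fun n => ?_⟩
    have h1 : ‖y n - x n‖ ≤ M₀ := hM₀ (Set.mem_range_self n)
    calc ‖y n‖ = ‖(y n - x n) + x n‖ := by rw [sub_add_cancel]
      _ ≤ ‖y n - x n‖ + ‖x n‖ := norm_add_le _ _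
      _ ≤ M₀ + R := add_le_add h1 (hxR n)
  -- weak cluster points along ultrafilters lie in zer(A+S)
  have hcluster : ∀ V : Ultrafilter ℕ, (V : Filter ℕ) ≤ atTop →
      ∃ p, (-(S p) ∈ A p) ∧ ∀ w : H, Tendsto (fun n => ⟪x n, w⟫) (V : Filter ℕ) (𝓝 ⟪p, w⟫) := by
    intro V hV
    obtain ⟨p, hp⟩ := exists_weak_cluster x R hxR V
    have hyw : ∀ w : H, Tendsto (fun n => ⟪y n, w⟫) (V : Filter ℕ) (𝓝 ⟪p, w⟫) := by
      intro w
      have h1 : Tendsto (fun n => ⟪y n - x n, w⟫) (V : Filter ℕ) (𝓝 (0 : ℝ)) := by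
        have := Filter.Tendsto.inner (𝕜 := ℝ) (hyx0.mono_left hV)
          (tendsto_const_nhds (x := w))
        simpa using this
      have h2 := (hp w).add h1
      simp only [add_zero] at h2
      have h3 : (fun n => ⟪x n, w⟫ + ⟪y n - x n, w⟫) = fun n => ⟪y n, w⟫ := by
        funext n
        rw [← inner_add_left]
        congr 1
        abel
      rwa [h3] at h2
    have hkey : ∀ x' u' : H, u' ∈ A x' → 0 ≤ ⟪p - x', -(S p) - u'⟫ := by
      intro x' u' hu
      have hfn : ∀ n, 0 ≤ ⟪y n - x', ystar n⟫ - ⟪S x', y n⟫ - (⟪y n, u'⟫ - ⟪x', u'⟫) := by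
        intro n
        have hmono := hA.1 (y n) x' (astar n) u' (hamem n) hu
        have e1 : ⟪y n - x', astar n - u'⟫
            = ⟪y n - x', ystar n⟫ - ⟪S x', y n⟫ - (⟪y n, u'⟫ - ⟪x', u'⟫) := by
          rw [hystar]
          simp only [inner_sub_left, inner_sub_right, inner_add_right]
          have e2 : ⟪y n, S (y n)⟫ = (0 : ℝ) := hskew _
          have e3 : ⟪x', S (y n)⟫ = -⟪y n, S x'⟫ := hskew2 _ _
          have e4 : ⟪S x', y n⟫ = ⟪y n, S x'⟫ := real_inner_comm _ _
          rw [e2, e3, e4]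
          ring
        rw [e1] at hmono
        exact hmono
      have l1 : Tendsto (fun n => ⟪y n - x', ystar n⟫) atTop (𝓝 (0 : ℝ)) := by
        apply squeeze_zero_norm (a := fun n => (My + ‖x'‖) * ‖ystar n‖)
        · intro n
          have h1 : ‖y n - x'‖ ≤ My + ‖x'‖ :=
            le_trans (norm_sub_le _ _) (add_le_add_left (hMy n) _)
          calc ‖⟪y n - x', ystar n⟫‖ = |⟪y n - x', ystar n⟫| := rfl
            _ ≤ ‖y n - x'‖ * ‖ystar n‖ := abs_real_inner_le_norm _ _
            _ ≤ (My + ‖x'‖) * ‖ystar n‖ :=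
                mul_le_mul_of_nonneg_right h1 (norm_nonneg _)
        · simpa using (hystar0.norm.const_mul (My + ‖x'‖))
      have l2 : Tendsto (fun n => ⟪S x', y n⟫) (V : Filter ℕ) (𝓝 ⟪S x', p⟫) := by
        have h1 := hyw (S x')
        have h2 : (fun n => ⟪S x', y n⟫) = fun n => ⟪y n, S x'⟫ :=
          funext fun n => real_inner_comm _ _
        rw [h2, real_inner_comm]
        exact h1
      have l3 := hyw u'
      have hlim : Tendsto
          (fun n => ⟪y n - x', ystar n⟫ - ⟪S x', y n⟫ - (⟪y n, u'⟫ - ⟪x', u'⟫))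
          (V : Filter ℕ) (𝓝 (0 - ⟪S x', p⟫ - (⟪p, u'⟫ - ⟪x', u'⟫))) :=
        ((l1.mono_left hV).sub l2).sub (l3.sub tendsto_const_nhds)
      have hge : 0 ≤ 0 - ⟪S x', p⟫ - (⟪p, u'⟫ - ⟪x', u'⟫) :=
        ge_of_tendsto hlim (Filter.Eventually.of_forall hfn)
      have hre : ⟪p - x', -(S p) - u'⟫ = 0 - ⟪S x', p⟫ - (⟪p, u'⟫ - ⟪x', u'⟫) := by
        simp only [inner_sub_left, inner_sub_right, inner_neg_right]
        have e1 : ⟪p, S p⟫ = (0 : ℝ) := hskew _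
        have e2 : ⟪x', S p⟫ = -⟪p, S x'⟫ := hskew2 _ _
        have e3 : ⟪S x', p⟫ = ⟪p, S x'⟫ := real_inner_comm _ _
        rw [e1, e2, e3]
        ring
      rw [hre]
      exact hge
    refine ⟨p, ?_, hp⟩
    set A' : H → Set H := fun w => A w ∪ {v | w = p ∧ v = -(S p)} with hA'_def
    have hA'mono : IsMonotoneOp A' := by
      intro a b ua vb hua hvb
      rcases hua with hua | hua <;> rcases hvb with hvb | hvb
      · exact hA.1 a b ua vb hua hvb
      · obtain ⟨hb, hv⟩ := hvb
        have h1 := hkey a ua hua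
        have h2 : ⟪a - p, ua - -(S p)⟫ = ⟪p - a, -(S p) - ua⟫ := by
          rw [← inner_neg_neg]
          congr 1 <;> abel
        rw [hb, hv, h2]
        exact h1
      · obtain ⟨ha, hv⟩ := hua
        rw [ha, hv]
        exact hkey b vb hvb
      · obtain ⟨ha, hv⟩ := hua
        obtain ⟨hb, hv'⟩ := hvb
        rw [ha, hb, hv, hv']
        simp
    have hsub : ∀ w, A w ⊆ A' w := fun w => Set.subset_union_left
    exact hA.2 A' hA'mono hsub p (Or.inr ⟨rfl, rfl⟩)
  -- assemble: all ultrafilter limits coincide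
  obtain ⟨V₀, hV₀⟩ : ∃ V : Ultrafilter ℕ, (V : Filter ℕ) ≤ atTop :=
    ⟨Ultrafilter.of atTop, Ultrafilter.of_le _⟩
  obtain ⟨p, hpZ, hp⟩ := hcluster V₀ hV₀
  refine ⟨p, hpZ, ?_⟩
  intro w
  rw [tendsto_iff_ultrafilter]
  intro V hV
  obtain ⟨q, hqZ, hq⟩ := hcluster V hV
  have hpq : q = p := by
    obtain ⟨Lp, hLp⟩ := limQ p hpZ
    obtain ⟨Lq, hLq⟩ := limQ q hqZ
    have hr_eq : ∀ n, ((‖x n - q‖ ^ 2 - ‖x n - p‖ ^ 2) + (‖p‖ ^ 2 - ‖q‖ ^ 2)) / 2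
        = ⟪x n, p - q⟫ := by
      intro n
      have hp2 : ‖x n - p‖ ^ 2 = ‖x n‖ ^ 2 - 2 * ⟪x n, p⟫ + ‖p‖ ^ 2 := norm_sub_sq_real _ _
      have hq2 : ‖x n - q‖ ^ 2 = ‖x n‖ ^ 2 - 2 * ⟪x n, q⟫ + ‖q‖ ^ 2 := norm_sub_sq_real _ _
      rw [inner_sub_right]
      rw [hp2, hq2]
      ring
    have hrlim : Tendsto (fun n => ⟪x n, p - q⟫) atTop
        (𝓝 (((Lq - Lp) + (‖p‖ ^ 2 - ‖q‖ ^ 2)) / 2)) := by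
      have h1 := ((hLq.sub hLp).add_const (‖p‖ ^ 2 - ‖q‖ ^ 2)).div_const 2
      have h2 : (fun n => ((‖x n - q‖ ^ 2 - ‖x n - p‖ ^ 2) + (‖p‖ ^ 2 - ‖q‖ ^ 2)) / 2)
          = fun n => ⟪x n, p - q⟫ := funext fun n => hr_eq n
      rwa [h2] at h1
    have hup : ⟪p, p - q⟫ = ((Lq - Lp) + (‖p‖ ^ 2 - ‖q‖ ^ 2)) / 2 :=
      tendsto_nhds_unique (hp (p - q)) (hrlim.mono_left hV₀)
    have huq : ⟪q, p - q⟫ = ((Lq - Lp) + (‖p‖ ^ 2 - ‖q‖ ^ 2)) / 2 :=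
      tendsto_nhds_unique (hq (p - q)) (hrlim.mono_left hV)
    have hz : ⟪p - q, p - q⟫ = (0 : ℝ) := by
      rw [inner_sub_left]
      linarith
    have := inner_self_eq_zero.mp hz
    rw [sub_eq_zero] at this
    exact this.symm
  rw [← hpq]
  exact hq w
end

section
/- Under the stated setting, suppose that zer(A + S) ≠ ∅, that u_n − x_n → 0 strongly, that e_n* → 0 strongly, and that (f_n*)_{n∈ℕ} is bounded. Then the sequences (y_n)_{n∈ℕ} and (y_n*)_{n∈ℕ} generated by the iteration are bounded, and limsup_{n→∞} ⟨x_n − y_n, y_n*⟩ ≤ 0. -/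
open Filter Topology RealInnerProductSpace

set_option maxHeartbeats 1000000 in
/-- `(y_n)` and `(y_n*)` are bounded and `limsup ⟨x_n − y_n, y_n*⟩ ≤ 0`. -/
theorem theorem1_bounded_limsup
    {H : Type*} [NormedAddCommGroup H] [InnerProductSpace ℝ H] [CompleteSpace H]
    (A : H → Set H) (hA : IsMaximalMonotone A)
    (S : H →L[ℝ] H) (hS : ContinuousLinearMap.adjoint S = -S)
    (ε α ρ : ℝ) (hε : ε ∈ Set.Ioo (0 : ℝ) 1) (hα : 0 < α) (hαρ : α ≤ ρ)
    (F : ℕ → H → H)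
    (hFstrong : ∀ n x y, α * ‖x - y‖ ^ 2 ≤ ⟪x - y, F n x - F n y⟫)
    (hFlip : ∀ n x y, ‖F n x - F n y‖ ≤ ρ * ‖x - y‖)
    (lam : ℕ → ℝ) (hlam : ∀ n, lam n ∈ Set.Icc ε (2 - ε))
    (x u estar fstar ustar y astar ystar : ℕ → H) (π : ℕ → ℝ)
    (hustar : ∀ n, ustar n = F n (u n) - S (u n) + estar n + fstar n)
    (hy : ∀ n, ustar n - F n (y n) ∈ A (y n))
    (hastar : ∀ n, astar n = ustar n - F n (y n))
    (hystar : ∀ n, ystar n = astar n + S (y n))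
    (hπ : ∀ n, π n = ⟪x n, ystar n⟫ - ⟪y n, astar n⟫)
    (hupd_pos : ∀ n, 0 < π n →
      x (n + 1) = x n - ((lam n * π n) / ‖ystar n‖ ^ 2) • ystar n)
    (hupd_neg : ∀ n, ¬ 0 < π n → x (n + 1) = x n)
    (hzer : ∃ z, -(S z) ∈ A z)
    (hux : Filter.Tendsto (fun n => u n - x n) Filter.atTop (nhds 0))
    (he : Filter.Tendsto estar Filter.atTop (nhds 0))
    (hf : Bornology.IsBounded (Set.range fstar)) :
    Bornology.IsBounded (Set.range y) ∧ Bornology.IsBounded (Set.range ystar) ∧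
      Filter.limsup (fun n => ⟪x n - y n, ystar n⟫) Filter.atTop ≤ 0 := by

  obtain ⟨z, hz⟩ := hzer
  obtain ⟨hε0, hε1⟩ := hε
  -- skew-adjointness facts
  have hskew : ∀ v w : H, ⟪v, S w⟫ = -⟪S v, w⟫ := by
    intro v w
    have h := ContinuousLinearMap.adjoint_inner_left S w v
    rw [hS] at h
    simp at h
    linarith [h]
  have hSzero : ∀ v : H, ⟪v, S v⟫ = 0 := by
    intro v
    have h := hskew v v
    rw [real_inner_comm (S v) v] at h
    rw [real_inner_comm]
    linarith
  have hay : ∀ n, astar n ∈ A (y n) := fun n => (hastar n) ▸ hy n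
  have hmono : ∀ n, 0 ≤ ⟪y n - z, astar n + S z⟫ := by
    intro n
    have h := hA.1 (y n) z (astar n) (-(S z)) (hay n) hz
    simpa [sub_neg_eq_add] using h
  have hgeo : ∀ n, 0 ≤ ⟪y n - z, ystar n⟫ := by
    intro n
    have h1 : ystar n = (astar n + S z) + (S (y n - z)) := by
      rw [hystar n, map_sub]; abel
    rw [h1, inner_add_right, hSzero]
    simpa using hmono n
  have hπeq : ∀ n, π n = ⟪x n - y n, ystar n⟫ := by
    intro n
    have h1 : ⟪y n, ystar n⟫ = ⟪y n, astar n⟫ := by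
      rw [hystar n, inner_add_right, hSzero, add_zero]
    rw [hπ n, inner_sub_left, h1]
  have hPge : ∀ n, π n ≤ ⟪x n - z, ystar n⟫ := by
    intro n
    have h1 : ⟪x n - z, ystar n⟫ = ⟪x n - y n, ystar n⟫ + ⟪y n - z, ystar n⟫ := by
      rw [← inner_add_left]; congr 1; abel
    rw [hπeq n]
    linarith [hgeo n, h1]
  set c : ℝ := ε * (2 - ε) with hc
  have hcpos : 0 < c := by nlinarith
  set q : ℕ → ℝ := fun n => max (π n) 0 ^ 2 / ‖ystar n‖ ^ 2 with hqdef
  have hq0 : ∀ n, 0 ≤ q n := fun n => div_nonneg (sq_nonneg _) (sq_nonneg _)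
  have hstep : ∀ n, ‖x (n + 1) - z‖ ^ 2 + c * q n ≤ ‖x n - z‖ ^ 2 := by
    intro n
    by_cases hp : 0 < π n
    · have hY : ystar n ≠ 0 := by
        intro h0
        rw [hπeq n, h0, inner_zero_right] at hp
        exact lt_irrefl _ hp
      have hY2 : (0 : ℝ) < ‖ystar n‖ ^ 2 := by
        have := norm_pos_iff.2 hY
        positivity
      set t : ℝ := lam n * π n / ‖ystar n‖ ^ 2 with ht
      have hx1 : x (n + 1) - z = (x n - z) - t • ystar n := by
        rw [hupd_pos n hp, ← ht]; abel
      have hexp : ‖x (n + 1) - z‖ ^ 2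
          = ‖x n - z‖ ^ 2 - 2 * (t * ⟪x n - z, ystar n⟫) + t ^ 2 * ‖ystar n‖ ^ 2 := by
        rw [hx1, norm_sub_sq_real, real_inner_smul_right, norm_smul]
        simp only [Real.norm_eq_abs, mul_pow, sq_abs]
        try ring
      have hmax : max (π n) 0 = π n := max_eq_left hp.le
      have htY : t * ‖ystar n‖ ^ 2 = lam n * π n := div_mul_cancel₀ _ hY2.ne'
      have hP := hPge n
      obtain ⟨hl1, hl2⟩ := hlam n
      have hq : q n = π n ^ 2 / ‖ystar n‖ ^ 2 := by rw [hqdef]; simp [hmax]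
      have hkey : c * q n ≤ 2 * (t * ⟪x n - z, ystar n⟫) - t ^ 2 * ‖ystar n‖ ^ 2 := by
        rw [hq, ← mul_div_assoc, div_le_iff₀ hY2]
        have h2 : (2 * (t * ⟪x n - z, ystar n⟫) - t ^ 2 * ‖ystar n‖ ^ 2) * ‖ystar n‖ ^ 2
            = 2 * (lam n * π n) * ⟪x n - z, ystar n⟫ - (lam n * π n) ^ 2 := by
          calc (2 * (t * ⟪x n - z, ystar n⟫) - t ^ 2 * ‖ystar n‖ ^ 2) * ‖ystar n‖ ^ 2
              = 2 * ⟪x n - z, ystar n⟫ * (t * ‖ystar n‖ ^ 2)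
                - (t * ‖ystar n‖ ^ 2) ^ 2 := by ring
            _ = 2 * (lam n * π n) * ⟪x n - z, ystar n⟫ - (lam n * π n) ^ 2 := by
                rw [htY]; ring
        rw [h2, hc]
        have h3 : 0 ≤ (lam n - ε) * ((2 - ε) - lam n) * π n ^ 2 :=
          mul_nonneg (mul_nonneg (by linarith) (by linarith)) (sq_nonneg _)
        have h4 : 0 ≤ 2 * lam n * π n * (⟪x n - z, ystar n⟫ - π n) :=
          mul_nonneg (mul_nonneg (mul_nonneg (by norm_num) (by linarith)) hp.le)
            (by linarith)
        nlinarith [h3, h4]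
      rw [hexp]
      linarith [hkey]
    · have hmax : max (π n) 0 = 0 := max_eq_right (not_lt.1 hp)
      have hqn : q n = 0 := by rw [hqdef]; simp [hmax]
      rw [hupd_neg n hp, hqn]
      simp
  have hsum : ∀ n, ∑ i ∈ Finset.range n, c * q i + ‖x n - z‖ ^ 2 ≤ ‖x 0 - z‖ ^ 2 := by
    intro n
    induction n with
    | zero => simp
    | succ n ih =>
      rw [Finset.sum_range_succ]
      have := hstep n
      linarith
  have hD : ∀ n, ‖x n - z‖ ≤ ‖x 0 - z‖ := by
    intro n
    have h1 := hsum n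
    have h2 : 0 ≤ ∑ i ∈ Finset.range n, c * q i :=
      Finset.sum_nonneg fun i _ => mul_nonneg hcpos.le (hq0 i)
    nlinarith [norm_nonneg (x n - z), norm_nonneg (x 0 - z)]
  obtain ⟨Cg, hCg⟩ : ∃ C, ∀ n, ‖u n - x n‖ ≤ C := by
    obtain ⟨C, hC⟩ := isBounded_iff_forall_norm_le.1 (Metric.isBounded_range_of_tendsto _ hux)
    exact ⟨C, fun n => hC _ (Set.mem_range_self n)⟩
  obtain ⟨Ce, hCe⟩ : ∃ C, ∀ n, ‖estar n‖ ≤ C := by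
    obtain ⟨C, hC⟩ := isBounded_iff_forall_norm_le.1 (Metric.isBounded_range_of_tendsto _ he)
    exact ⟨C, fun n => hC _ (Set.mem_range_self n)⟩
  obtain ⟨Cf, hCf⟩ : ∃ C, ∀ n, ‖fstar n‖ ≤ C := by
    obtain ⟨C, hC⟩ := isBounded_iff_forall_norm_le.1 hf
    exact ⟨C, fun n => hC _ (Set.mem_range_self n)⟩
  have hCe0 : 0 ≤ Ce := le_trans (norm_nonneg _) (hCe 0)
  have hCf0 : 0 ≤ Cf := le_trans (norm_nonneg _) (hCf 0)
  set Cu : ℝ := Cg + ‖x 0 - z‖ with hCudef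
  have huz : ∀ n, ‖u n - z‖ ≤ Cu := by
    intro n
    calc ‖u n - z‖ = ‖(u n - x n) + (x n - z)‖ := by congr 1; abel
      _ ≤ ‖u n - x n‖ + ‖x n - z‖ := norm_add_le _ _
      _ ≤ Cg + ‖x 0 - z‖ := add_le_add (hCg n) (hD n)
  have hCu0 : 0 ≤ Cu := le_trans (norm_nonneg _) (huz 0)
  have hρS : (0:ℝ) ≤ ρ + ‖S‖ := by
    have := norm_nonneg S
    linarith
  set B : ℝ := ((ρ + ‖S‖) * Cu + Ce + Cf) / α with hB
  have hB0 : 0 ≤ B := div_nonneg (by nlinarith [mul_nonneg hρS hCu0]) hα.le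
  have hyz : ∀ n, ‖y n - z‖ ≤ B := by
    intro n
    have h0 := hmono n
    have hast : astar n + S z
        = (F n (u n) - F n (y n)) + (S z - S (u n)) + (estar n + fstar n) := by
      rw [hastar n, hustar n]; abel
    rw [hast, inner_add_right, inner_add_right] at h0
    have h2 : ⟪y n - z, F n (u n) - F n (y n)⟫ = -⟪y n - z, F n (y n) - F n (u n)⟫ := by
      rw [← inner_neg_right]; congr 1; abel
    have hsplit : ⟪y n - z, F n (y n) - F n (u n)⟫
        = ⟪y n - z, F n (y n) - F n z⟫ + ⟪y n - z, F n z - F n (u n)⟫ := by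
      rw [← inner_add_right]; congr 1; abel
    have hsm := hFstrong n (y n) z
    have hcs1 : |⟪y n - z, F n z - F n (u n)⟫| ≤ ‖y n - z‖ * (ρ * ‖u n - z‖) := by
      refine le_trans (abs_real_inner_le_norm _ _) ?_
      have h := hFlip n z (u n)
      rw [norm_sub_rev z (u n)] at h
      exact mul_le_mul_of_nonneg_left h (norm_nonneg _)
    have hcs2 : ⟪y n - z, S z - S (u n)⟫ ≤ ‖y n - z‖ * (‖S‖ * ‖u n - z‖) := by
      refine le_trans (real_inner_le_norm _ _) ?_
      have h5 : ‖S z - S (u n)‖ ≤ ‖S‖ * ‖u n - z‖ := by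
        calc ‖S z - S (u n)‖ = ‖S (z - u n)‖ := by rw [map_sub]
          _ ≤ ‖S‖ * ‖z - u n‖ := S.le_opNorm _
          _ = ‖S‖ * ‖u n - z‖ := by rw [norm_sub_rev]
      exact mul_le_mul_of_nonneg_left h5 (norm_nonneg _)
    have hcs3 : ⟪y n - z, estar n + fstar n⟫ ≤ ‖y n - z‖ * (Ce + Cf) := by
      refine le_trans (real_inner_le_norm _ _) ?_
      exact mul_le_mul_of_nonneg_left
        (le_trans (norm_add_le _ _) (add_le_add (hCe n) (hCf n))) (norm_nonneg _)
    have habs := abs_le.1 hcs1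
    have h7 : α * ‖y n - z‖ ^ 2 ≤ ‖y n - z‖ * (ρ * ‖u n - z‖)
        + ‖y n - z‖ * (‖S‖ * ‖u n - z‖) + ‖y n - z‖ * (Ce + Cf) := by
      linarith [hsm, hsplit, h0, h2, habs.1, hcs2, hcs3]
    have h8 : ‖y n - z‖ * (ρ * ‖u n - z‖) + ‖y n - z‖ * (‖S‖ * ‖u n - z‖)
        + ‖y n - z‖ * (Ce + Cf) ≤ ‖y n - z‖ * ((ρ + ‖S‖) * Cu + Ce + Cf) := by
      have h9 : ‖y n - z‖ * ((ρ + ‖S‖) * ‖u n - z‖) ≤ ‖y n - z‖ * ((ρ + ‖S‖) * Cu) := by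
        apply mul_le_mul_of_nonneg_left _ (norm_nonneg _)
        exact mul_le_mul_of_nonneg_left (huz n) hρS
      nlinarith [h9]
    have h10 : α * B = (ρ + ‖S‖) * Cu + Ce + Cf := by
      rw [hB]; field_simp
    rcases ((norm_nonneg (y n - z)).eq_or_lt.imp Eq.symm id) with h | h
    · exact h.trans_le hB0
    · have h11 : α * ‖y n - z‖ ^ 2 ≤ ‖y n - z‖ * (α * B) := by
        rw [h10]; linarith [h7, h8]
      have h12 : (α * ‖y n - z‖) * ‖y n - z‖ ≤ (α * ‖y n - z‖) * B := by nlinarith [h11]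
      exact le_of_mul_le_mul_left h12 (mul_pos hα h)
  set Ca : ℝ := ρ * (Cu + B) + ‖S‖ * (Cu + ‖z‖) + Ce + Cf with hCa
  have hasb : ∀ n, ‖astar n‖ ≤ Ca := by
    intro n
    have h1 : astar n = ((F n (u n) - F n (y n)) - S (u n) + estar n) + fstar n := by
      rw [hastar n, hustar n]; abel
    have h2 : ‖astar n‖ ≤ ‖F n (u n) - F n (y n)‖ + ‖S (u n)‖ + ‖estar n‖ + ‖fstar n‖ := by
      rw [h1]
      refine le_trans (norm_add_le _ _) (add_le_add_left ?_ _)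
      refine le_trans (norm_add_le _ _) (add_le_add_left ?_ _)
      exact norm_sub_le _ _
    have h3 : ‖F n (u n) - F n (y n)‖ ≤ ρ * (Cu + B) := by
      refine le_trans (hFlip n (u n) (y n)) ?_
      apply mul_le_mul_of_nonneg_left _ (by linarith)
      calc ‖u n - y n‖ = ‖(u n - z) - (y n - z)‖ := by congr 1; abel
        _ ≤ ‖u n - z‖ + ‖y n - z‖ := norm_sub_le _ _
        _ ≤ Cu + B := add_le_add (huz n) (hyz n)
    have h4 : ‖S (u n)‖ ≤ ‖S‖ * (Cu + ‖z‖) := by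
      refine le_trans (S.le_opNorm _) ?_
      apply mul_le_mul_of_nonneg_left _ (norm_nonneg S)
      calc ‖u n‖ = ‖(u n - z) + z‖ := by congr 1; abel
        _ ≤ ‖u n - z‖ + ‖z‖ := norm_add_le _ _
        _ ≤ Cu + ‖z‖ := add_le_add (huz n) le_rfl
    linarith [h2, h3, h4, hCe n, hCf n]
  set My : ℝ := Ca + ‖S‖ * (B + ‖z‖) with hMy
  have hysb : ∀ n, ‖ystar n‖ ≤ My := by
    intro n
    rw [hystar n]
    refine le_trans (norm_add_le _ _) (add_le_add (hasb n) ?_)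
    refine le_trans (S.le_opNorm _) ?_
    apply mul_le_mul_of_nonneg_left _ (norm_nonneg S)
    calc ‖y n‖ = ‖(y n - z) + z‖ := by congr 1; abel
      _ ≤ ‖y n - z‖ + ‖z‖ := norm_add_le _ _
      _ ≤ B + ‖z‖ := add_le_add (hyz n) le_rfl
  have hMy0 : 0 ≤ My := le_trans (norm_nonneg _) (hysb 0)
  refine ⟨?_, ?_, ?_⟩
  · apply isBounded_iff_forall_norm_le.2
    refine ⟨B + ‖z‖, ?_⟩
    rintro _ ⟨n, rfl⟩
    calc ‖y n‖ = ‖(y n - z) + z‖ := by congr 1; abel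
      _ ≤ ‖y n - z‖ + ‖z‖ := norm_add_le _ _
      _ ≤ B + ‖z‖ := add_le_add (hyz n) le_rfl
  · apply isBounded_iff_forall_norm_le.2
    refine ⟨My, ?_⟩
    rintro _ ⟨n, rfl⟩
    exact hysb n
  · have hqto : Tendsto q atTop (nhds 0) := by
      apply (summable_of_sum_range_le (c := ‖x 0 - z‖ ^ 2 / c) hq0 ?_).tendsto_atTop_zero
      intro n
      rw [le_div_iff₀ hcpos]
      have h3 : (∑ i ∈ Finset.range n, q i) * c = ∑ i ∈ Finset.range n, c * q i := by
        rw [Finset.sum_mul]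
        exact Finset.sum_congr rfl fun i _ => mul_comm _ _
      rw [h3]
      have h1 := hsum n
      nlinarith [sq_nonneg ‖x n - z‖]
    have hmaxsq : ∀ n, (max (π n) 0) ^ 2 ≤ q n * My ^ 2 := by
      intro n
      by_cases h0 : ystar n = 0
      · have hπ0 : π n = 0 := by rw [hπeq n, h0, inner_zero_right]
        have := mul_nonneg (hq0 n) (sq_nonneg My)
        simpa [hπ0] using this
      · have hY2 : (0 : ℝ) < ‖ystar n‖ ^ 2 := by
          have := norm_pos_iff.2 h0
          positivity
        have h1 : q n * ‖ystar n‖ ^ 2 = (max (π n) 0) ^ 2 := div_mul_cancel₀ _ hY2.ne'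
        have h2 : ‖ystar n‖ ≤ My := hysb n
        have h3 : ‖ystar n‖ ^ 2 ≤ My ^ 2 := by nlinarith [norm_nonneg (ystar n)]
        have h4 := mul_le_mul_of_nonneg_left h3 (hq0 n)
        linarith [h1, h4]
    have hmaxto : Tendsto (fun n => max (π n) 0) atTop (nhds 0) := by
      have h1 : Tendsto (fun n => q n * My ^ 2) atTop (nhds 0) := by
        simpa using hqto.mul_const (My ^ 2)
      have h2 : Tendsto (fun n => (max (π n) 0) ^ 2) atTop (nhds 0) :=
        squeeze_zero (fun n => sq_nonneg _) hmaxsq h1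
      have h3 : Tendsto (fun n => Real.sqrt ((max (π n) 0) ^ 2)) atTop (nhds (Real.sqrt 0)) :=
        (Real.continuous_sqrt.tendsto 0).comp h2
      rw [Real.sqrt_zero] at h3
      have h4 : (fun n => Real.sqrt ((max (π n) 0) ^ 2)) = fun n => max (π n) 0 :=
        funext fun n => Real.sqrt_sq (le_max_right _ _)
      rwa [h4] at h3
    have hπlb : Filter.IsBoundedUnder (· ≥ ·) atTop π := by
      refine Filter.isBoundedUnder_of ⟨-((‖x 0 - z‖ + B) * My), fun n => ?_⟩
      have h1 : |π n| ≤ ‖x n - y n‖ * ‖ystar n‖ := by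
        rw [hπeq n]; exact abs_real_inner_le_norm _ _
      have h2 : ‖x n - y n‖ ≤ ‖x 0 - z‖ + B := by
        calc ‖x n - y n‖ = ‖(x n - z) - (y n - z)‖ := by congr 1; abel
          _ ≤ ‖x n - z‖ + ‖y n - z‖ := norm_sub_le _ _
          _ ≤ _ := add_le_add (hD n) (hyz n)
      have h6 : ‖x n - y n‖ * ‖ystar n‖ ≤ (‖x 0 - z‖ + B) * My :=
        mul_le_mul h2 (hysb n) (norm_nonneg _) (add_nonneg (norm_nonneg _) hB0)
      have h7 := (abs_le.1 h1).1
      simp only [ge_iff_le]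
      linarith
    have h4 : (fun n => ⟪x n - y n, ystar n⟫) = π := funext fun n => (hπeq n).symm
    have h5 : Filter.limsup π atTop ≤ Filter.limsup (fun n => max (π n) 0) atTop :=
      Filter.limsup_le_limsup (Filter.Eventually.of_forall fun n => le_max_left _ _)
        hπlb.isCoboundedUnder_le hmaxto.isBoundedUnder_le
    rw [hmaxto.limsup_eq] at h5
    rw [h4]
    exact h5
end

section
/- Under the stated setting, suppose that zer(A + S) ≠ ∅, that u_n − x_n → 0 strongly, that e_n* → 0 strongly, that (f_n*)_{n∈ℕ} is bounded, and that there exists δ ∈ (0,1) such that for every n ∈ ℕ: ⟨u_n − y_n, f_n*⟩ ≥ −δ⟨u_n − y_n, F_n u_n − F_n y_n⟩ and ⟨a_n* + S u_n − e_n*, f_n*⟩ ≤ δ‖a_n* + S u_n − e_n*‖². Then u_n − y_n → 0 strongly and F_n u_n − F_n y_n → 0 strongly. -/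
open Filter Topology RealInnerProductSpace

set_option maxHeartbeats 2000000 in
/-- `u_n − y_n → 0` and `F_n u_n − F_n y_n → 0` strongly. -/
theorem theorem1_uy_to_zero
    {H : Type*} [NormedAddCommGroup H] [InnerProductSpace ℝ H] [CompleteSpace H]
    (A : H → Set H) (hA : IsMaximalMonotone A)
    (S : H →L[ℝ] H) (hS : ContinuousLinearMap.adjoint S = -S)
    (ε α ρ : ℝ) (hε : ε ∈ Set.Ioo (0 : ℝ) 1) (hα : 0 < α) (hαρ : α ≤ ρ)
    (F : ℕ → H → H)
    (hFstrong : ∀ n x y, α * ‖x - y‖ ^ 2 ≤ ⟪x - y, F n x - F n y⟫)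
    (hFlip : ∀ n x y, ‖F n x - F n y‖ ≤ ρ * ‖x - y‖)
    (lam : ℕ → ℝ) (hlam : ∀ n, lam n ∈ Set.Icc ε (2 - ε))
    (x u estar fstar ustar y astar ystar : ℕ → H) (π : ℕ → ℝ)
    (hustar : ∀ n, ustar n = F n (u n) - S (u n) + estar n + fstar n)
    (hy : ∀ n, ustar n - F n (y n) ∈ A (y n))
    (hastar : ∀ n, astar n = ustar n - F n (y n))
    (hystar : ∀ n, ystar n = astar n + S (y n))
    (hπ : ∀ n, π n = ⟪x n, ystar n⟫ - ⟪y n, astar n⟫)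
    (hupd_pos : ∀ n, 0 < π n →
      x (n + 1) = x n - ((lam n * π n) / ‖ystar n‖ ^ 2) • ystar n)
    (hupd_neg : ∀ n, ¬ 0 < π n → x (n + 1) = x n)
    (hzer : ∃ z, -(S z) ∈ A z)
    (hux : Filter.Tendsto (fun n => u n - x n) Filter.atTop (nhds 0))
    (he : Filter.Tendsto estar Filter.atTop (nhds 0))
    (hf : Bornology.IsBounded (Set.range fstar))
    (hδ : ∃ δ ∈ Set.Ioo (0 : ℝ) 1, ∀ n,
      -(δ * ⟪u n - y n, F n (u n) - F n (y n)⟫) ≤ ⟪u n - y n, fstar n⟫ ∧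
      ⟪astar n + S (u n) - estar n, fstar n⟫ ≤ δ * ‖astar n + S (u n) - estar n‖ ^ 2) :
    Filter.Tendsto (fun n => u n - y n) Filter.atTop (nhds 0) ∧
      Filter.Tendsto (fun n => F n (u n) - F n (y n)) Filter.atTop (nhds 0) := by
  obtain ⟨z, hz⟩ := hzer
  obtain ⟨δ, ⟨hδ0, hδ1⟩, hδn⟩ := hδ
  obtain ⟨hε0, hε1⟩ := hε
  -- skewness
  have hskew : ∀ v : H, ⟪v, S v⟫ = 0 := by
    intro v
    have h1 : ⟪(ContinuousLinearMap.adjoint S) v, v⟫ = ⟪v, S v⟫ :=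
      ContinuousLinearMap.adjoint_inner_left S v v
    rw [hS] at h1
    simp only [ContinuousLinearMap.neg_apply, inner_neg_left] at h1
    have h2 := real_inner_comm (S v) v
    linarith
  have hmem : ∀ n, astar n ∈ A (y n) := fun n => (hastar n) ▸ hy n
  have hπy : ∀ n, π n = ⟪x n - y n, ystar n⟫ := by
    intro n
    rw [hπ n, inner_sub_left]
    have h : ⟪y n, ystar n⟫ = ⟪y n, astar n⟫ := by
      rw [hystar n, inner_add_right, hskew, add_zero]
    rw [h]
  have hπle : ∀ n, π n ≤ ⟪x n - z, ystar n⟫ := by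
    intro n
    have hmono := hA.1 (y n) z (astar n) (-(S z)) (hmem n) hz
    have hy2 : ⟪y n - z, ystar n⟫
        = ⟪y n - z, astar n - -(S z)⟫ + ⟪y n - z, S (y n - z)⟫ := by
      rw [← inner_add_right]
      congr 1
      rw [hystar n, map_sub]
      abel
    have h0 : 0 ≤ ⟪y n - z, ystar n⟫ := by
      rw [hy2, hskew, add_zero]; exact hmono
    have hsplit : ⟪x n - z, ystar n⟫ = π n + ⟪y n - z, ystar n⟫ := by
      rw [hπy n, ← inner_add_left]
      congr 1
      abel
    linarith
  set q : ℕ → ℝ := fun n => if 0 < π n then π n / ‖ystar n‖ else 0 with hqdef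
  have hq0 : ∀ n, 0 ≤ q n := by
    intro n
    by_cases hp : 0 < π n
    · simp only [hqdef, if_pos hp]
      positivity
    · simp only [hqdef, if_neg hp]
      exact le_rfl
  have hystar_ne : ∀ n, 0 < π n → ystar n ≠ 0 := by
    intro n hpos hzero
    rw [hπy n, hzero, inner_zero_right] at hpos
    exact lt_irrefl 0 hpos
  -- Fejér step
  have hfej : ∀ n, ‖x (n+1) - z‖^2 ≤ ‖x n - z‖^2 - ε^2 * q n ^ 2 := by
    intro n
    by_cases hpos : 0 < π n
    · have hs : ystar n ≠ 0 := hystar_ne n hpos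
      have hs0 : (0:ℝ) < ‖ystar n‖ := norm_pos_iff.mpr hs
      set c := lam n * π n / ‖ystar n‖^2 with hc
      obtain ⟨hl1, hl2⟩ := hlam n
      have hcpos : 0 < c := by
        rw [hc]
        have : 0 < lam n := lt_of_lt_of_le hε0 hl1
        positivity
      have hexp : ‖x (n+1) - z‖^2
          = ‖x n - z‖^2 - 2*c*⟪x n - z, ystar n⟫ + c^2 * ‖ystar n‖^2 := by
        rw [hupd_pos n hpos]
        have h : x n - c • ystar n - z = (x n - z) - c • ystar n := by abel
        rw [h, norm_sub_sq_real, real_inner_smul_right, norm_smul,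
          Real.norm_eq_abs, mul_pow, sq_abs]
        ring
      have hkey : 2*c*π n - c^2 * ‖ystar n‖^2
          = lam n * (2 - lam n) * (π n / ‖ystar n‖)^2 := by
        rw [hc]
        field_simp
      have hql : q n = π n / ‖ystar n‖ := if_pos hpos
      have hεq : ε^2 * q n^2 ≤ lam n * (2 - lam n) * q n^2 := by
        apply mul_le_mul_of_nonneg_right _ (sq_nonneg _)
        nlinarith [mul_nonneg (by linarith : (0:ℝ) ≤ lam n - ε)
          (by linarith : (0:ℝ) ≤ 2 - ε - lam n)]
      have hmul : 2*c*π n ≤ 2*c*⟪x n - z, ystar n⟫ := by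
        have := hπle n
        nlinarith
      rw [hql] at hεq ⊢
      linarith [hexp, hkey, hεq, hmul]
    · have hql : q n = 0 := if_neg hpos
      rw [hupd_neg n hpos, hql]
      ring_nf
      nlinarith [sq_nonneg ε]
  set d : ℕ → ℝ := fun n => ‖x n - z‖^2 with hddef
  have hdanti : ∀ n, d (n+1) ≤ d n := by
    intro n
    have := hfej n
    have h2 : 0 ≤ ε^2 * q n ^2 := by positivity
    simp only [hddef]
    linarith
  have hdanti : Antitone d := antitone_nat_of_succ_le hdanti
  have hdbdd : BddBelow (Set.range d) := by
    refine ⟨0, ?_⟩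
    rintro _ ⟨n, rfl⟩
    positivity
  have hdconv : Tendsto d atTop (𝓝 (⨅ n, d n)) := tendsto_atTop_ciInf hdanti hdbdd
  have hdiff : Tendsto (fun n => d n - d (n+1)) atTop (𝓝 0) := by
    have h2 : Tendsto (fun n => d (n+1)) atTop (𝓝 (⨅ n, d n)) :=
      hdconv.comp (tendsto_add_atTop_nat 1)
    simpa using hdconv.sub h2
  have hq2 : Tendsto (fun n => q n ^ 2) atTop (𝓝 0) := by
    apply squeeze_zero (fun n => sq_nonneg _) (g := fun n => (d n - d (n+1)) / ε^2)
    · intro n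
      rw [le_div_iff₀ (by positivity)]
      have := hfej n
      simp only [hddef]
      nlinarith
    · simpa using hdiff.div_const (ε^2)
  have hqto : Tendsto q atTop (𝓝 0) := by
    have h := (Real.continuous_sqrt.tendsto 0).comp hq2
    simp only [Real.sqrt_zero] at h
    convert h using 1
    funext n
    simp only [Function.comp_apply, Real.sqrt_sq (hq0 n)]
  -- norm bounds
  set t : ℕ → ℝ := fun n => ‖u n - y n‖ with htdef
  set C : ℝ := ρ / (1 - δ) + ‖S‖ with hCdef
  have hδ1' : (0:ℝ) < 1 - δ := by linarith
  have hC0 : 0 ≤ C := by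
    rw [hCdef]
    have : 0 < ρ := lt_of_lt_of_le hα hαρ
    positivity
  have hvb_eq : ∀ n, astar n + S (u n) - estar n
      = (F n (u n) - F n (y n)) + fstar n := by
    intro n
    rw [hastar n, hustar n]
    abel
  have hw_norm : ∀ n, ‖F n (u n) - F n (y n)‖ ≤ ρ * t n := fun n => hFlip n (u n) (y n)
  have hvb_norm : ∀ n, ‖astar n + S (u n) - estar n‖ ≤ ρ / (1 - δ) * t n := by
    intro n
    have h2 := (hδn n).2
    have hiw : (1 - δ) * ‖astar n + S (u n) - estar n‖^2
        ≤ ⟪astar n + S (u n) - estar n, F n (u n) - F n (y n)⟫ := by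
      have : ⟪astar n + S (u n) - estar n, F n (u n) - F n (y n)⟫
          = ‖astar n + S (u n) - estar n‖^2 - ⟪astar n + S (u n) - estar n, fstar n⟫ := by
        have hsub : F n (u n) - F n (y n) = (astar n + S (u n) - estar n) - fstar n := by
          rw [hvb_eq n]; abel
        rw [hsub, inner_sub_right, real_inner_self_eq_norm_sq]
      rw [this]
      linarith
    have hcs : ⟪astar n + S (u n) - estar n, F n (u n) - F n (y n)⟫
        ≤ ‖astar n + S (u n) - estar n‖ * ‖F n (u n) - F n (y n)‖ := real_inner_le_norm _ _
    have hn0 : 0 ≤ ‖astar n + S (u n) - estar n‖ := norm_nonneg _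
    have hρ0 : 0 < ρ := lt_of_lt_of_le hα hαρ
    have ht0 : (0:ℝ) ≤ t n := norm_nonneg _
    rcases eq_or_lt_of_le hn0 with h0 | h0
    · rw [← h0]
      exact mul_nonneg (le_of_lt (div_pos hρ0 hδ1')) ht0
    · have key : (1 - δ) * ‖astar n + S (u n) - estar n‖ ≤ ρ * t n := by
        have h5 : ((1 - δ) * ‖astar n + S (u n) - estar n‖) * ‖astar n + S (u n) - estar n‖
            ≤ (ρ * t n) * ‖astar n + S (u n) - estar n‖ := by
          nlinarith [hiw, hcs, mul_le_mul_of_nonneg_left (hw_norm n) hn0]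
        exact le_of_mul_le_mul_right h5 h0
      rw [div_mul_eq_mul_div, le_div_iff₀ hδ1', mul_comm]
      exact key
  have hyeq : ∀ n, ystar n = (astar n + S (u n) - estar n) + estar n - S (u n - y n) := by
    intro n
    rw [hystar n, map_sub]
    abel
  have hsnorm : ∀ n, ‖ystar n‖ ≤ C * t n + ‖estar n‖ := by
    intro n
    rw [hyeq n]
    calc ‖astar n + S (u n) - estar n + estar n - S (u n - y n)‖
        ≤ ‖astar n + S (u n) - estar n + estar n‖ + ‖S (u n - y n)‖ := norm_sub_le _ _
      _ ≤ ‖astar n + S (u n) - estar n‖ + ‖estar n‖ + ‖S (u n - y n)‖ := by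
          have := norm_add_le (astar n + S (u n) - estar n) (estar n)
          linarith
      _ ≤ ρ / (1 - δ) * t n + ‖estar n‖ + ‖S‖ * t n := by
          have h1 := hvb_norm n
          have h2 := S.le_opNorm (u n - y n)
          simp only [htdef] at *
          linarith
      _ = C * t n + ‖estar n‖ := by rw [hCdef]; ring
  -- lower bound on π
  have hlow : ∀ n, (1 - δ) * α * t n ^ 2
      ≤ π n + t n * ‖estar n‖ + ‖x n - u n‖ * ‖ystar n‖ := by
    intro n
    have hsplit : π n = ⟪x n - u n, ystar n⟫ + ⟪u n - y n, ystar n⟫ := by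
      rw [hπy n, ← inner_add_left]
      congr 1
      abel
    have huyexp : ⟪u n - y n, ystar n⟫
        = ⟪u n - y n, F n (u n) - F n (y n)⟫ + ⟪u n - y n, fstar n⟫
          + ⟪u n - y n, estar n⟫ := by
      have h : ystar n = ((F n (u n) - F n (y n)) + fstar n) + estar n - S (u n - y n) := by
        rw [hyeq n, hvb_eq n]
      rw [h, inner_sub_right, inner_add_right, inner_add_right, hskew]
      ring
    have h1 := (hδn n).1
    have h2 := hFstrong n (u n) (y n)
    have h3 : ⟪u n - y n, estar n⟫ ≥ -(t n * ‖estar n‖) := by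
      have := abs_real_inner_le_norm (u n - y n) (estar n)
      have h := neg_abs_le ⟪u n - y n, estar n⟫
      simp only [htdef]
      linarith
    have h4 : ⟪x n - u n, ystar n⟫ ≥ -(‖x n - u n‖ * ‖ystar n‖) := by
      have := abs_real_inner_le_norm (x n - u n) (ystar n)
      have h := neg_abs_le ⟪x n - u n, ystar n⟫
      linarith
    have h5 : (1 - δ) * (α * t n ^ 2) ≤ (1 - δ) * ⟪u n - y n, F n (u n) - F n (y n)⟫ := by
      apply mul_le_mul_of_nonneg_left _ (le_of_lt hδ1')
      simpa only [htdef] using h2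
    linarith [hsplit, huyexp]
  -- boundedness
  have hxz : ∀ n, ‖x n - z‖ ≤ ‖x 0 - z‖ := by
    intro n
    have hd : d n ≤ d 0 := hdanti (Nat.zero_le n)
    simp only [hddef] at hd
    calc ‖x n - z‖ = Real.sqrt (‖x n - z‖^2) := (Real.sqrt_sq (norm_nonneg _)).symm
      _ ≤ Real.sqrt (‖x 0 - z‖^2) := Real.sqrt_le_sqrt hd
      _ = ‖x 0 - z‖ := Real.sqrt_sq (norm_nonneg _)
  have hm1to : Tendsto (fun n => ‖x n - u n‖) atTop (𝓝 0) := by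
    have := hux.norm
    simp only [norm_zero] at this
    convert this using 2 with n
    exact norm_sub_rev _ _
  obtain ⟨M1, hM1⟩ : ∃ M1, ∀ n, ‖x n - u n‖ ≤ M1 := by
    obtain ⟨M1, hM1⟩ := hm1to.bddAbove_range
    exact ⟨M1, fun n => hM1 ⟨n, rfl⟩⟩
  have hbto : Tendsto (fun n => ‖estar n‖) atTop (𝓝 0) := by
    have := he.norm
    simpa using this
  obtain ⟨Me, hMe⟩ : ∃ Me, ∀ n, ‖estar n‖ ≤ Me := by
    obtain ⟨Me, hMe⟩ := hbto.bddAbove_range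
    exact ⟨Me, fun n => hMe ⟨n, rfl⟩⟩
  have hMe0 : 0 ≤ Me := le_trans (norm_nonneg _) (hMe 0)
  have hM10 : 0 ≤ M1 := le_trans (norm_nonneg _) (hM1 0)
  set K : ℝ := ‖x 0 - z‖ + M1 with hKdef
  have hK0 : 0 ≤ K := by rw [hKdef]; positivity
  set β : ℝ := (1 - δ) * α with hβdef
  have hβ0 : 0 < β := mul_pos hδ1' hα
  have hπq : ∀ n, π n ≤ q n * ‖ystar n‖ := by
    intro n
    by_cases hp : 0 < π n
    · have hsne := hystar_ne n hp
      have hs0 : (0:ℝ) < ‖ystar n‖ := norm_pos_iff.mpr hsne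
      rw [hqdef]
      simp only [if_pos hp]
      rw [div_mul_cancel₀]
      exact ne_of_gt hs0
    · push_neg at hp
      exact le_trans hp (mul_nonneg (hq0 n) (norm_nonneg _))
  -- t is bounded
  have hquad : ∀ n, β * t n ^ 2 ≤ K * (C * t n + Me) + t n * Me := by
    intro n
    have h1 := hlow n
    have h2 := hπle n
    have h3 : ⟪x n - z, ystar n⟫ ≤ ‖x n - z‖ * ‖ystar n‖ := real_inner_le_norm _ _
    have h4 := hsnorm n
    have h5 := hxz n
    have h6 := hMe n
    have h7 := hM1 n
    have ht0 : 0 ≤ t n := norm_nonneg _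
    have hs0 : 0 ≤ ‖ystar n‖ := norm_nonneg _
    have hxz0 : 0 ≤ ‖x n - z‖ := norm_nonneg _
    have hxu0 : 0 ≤ ‖x n - u n‖ := norm_nonneg _
    rw [hβdef, hKdef]
    nlinarith [mul_le_mul h5 h4 hs0 (norm_nonneg (x 0 - z)),
      mul_le_mul h7 h4 hs0 hM10]
  set T : ℝ := (K * C + Me) / β + K * Me / β + 1 with hTdef
  have hTb : ∀ n, t n ≤ T := by
    intro n
    have hqn := hquad n
    have ht0 : 0 ≤ t n := norm_nonneg _
    have hP0 : 0 ≤ (K * C + Me) / β := by positivity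
    have hQ0 : 0 ≤ K * Me / β := by positivity
    have hqn' : t n ^ 2 ≤ (K * C + Me) / β * t n + K * Me / β := by
      rw [div_mul_eq_mul_div, ← add_div, le_div_iff₀ hβ0]
      nlinarith
    rcases le_or_gt (t n) 1 with h | h
    · rw [hTdef]; linarith
    · rw [hTdef]
      nlinarith
  have hT0 : 0 ≤ T := le_trans (norm_nonneg _) (hTb 0)
  -- final squeeze
  have hfinal : ∀ n, β * t n ^ 2
      ≤ (q n + ‖x n - u n‖) * (C * T + Me) + T * ‖estar n‖ := by
    intro n
    have h1 := hlow n
    have h2 := hπq n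
    have h4 := hsnorm n
    have h6 := hMe n
    have h7 := hTb n
    have ht0 : 0 ≤ t n := norm_nonneg _
    have hs0 : 0 ≤ ‖ystar n‖ := norm_nonneg _
    have hxu0 : 0 ≤ ‖x n - u n‖ := norm_nonneg _
    have he0 : 0 ≤ ‖estar n‖ := norm_nonneg _
    have hsT : ‖ystar n‖ ≤ C * T + Me := by nlinarith
    rw [hβdef]
    nlinarith [mul_le_mul_of_nonneg_left hsT (hq0 n),
      mul_le_mul_of_nonneg_left hsT hxu0]
  have hrhs : Tendsto (fun n => (q n + ‖x n - u n‖) * (C * T + Me) + T * ‖estar n‖)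
      atTop (𝓝 0) := by
    have h1 : Tendsto (fun n => (q n + ‖x n - u n‖) * (C * T + Me)) atTop (𝓝 0) := by
      simpa using (hqto.add hm1to).mul_const (C * T + Me)
    have h2 : Tendsto (fun n => T * ‖estar n‖) atTop (𝓝 0) := by
      simpa using hbto.const_mul T
    simpa using h1.add h2
  have ht2 : Tendsto (fun n => t n ^ 2) atTop (𝓝 0) := by
    apply squeeze_zero (fun n => sq_nonneg _)
      (g := fun n => ((q n + ‖x n - u n‖) * (C * T + Me) + T * ‖estar n‖) / β)
    · intro n
      rw [le_div_iff₀ hβ0]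
      nlinarith [hfinal n]
    · simpa using hrhs.div_const β
  have htto : Tendsto t atTop (𝓝 0) := by
    have h := (Real.continuous_sqrt.tendsto 0).comp ht2
    simp only [Real.sqrt_zero] at h
    convert h using 1
    funext n
    simp only [Function.comp_apply, Real.sqrt_sq (show (0:ℝ) ≤ t n from norm_nonneg (u n - y n))]
  constructor
  · exact tendsto_zero_iff_norm_tendsto_zero.mpr htto
  · apply tendsto_zero_iff_norm_tendsto_zero.mpr
    apply squeeze_zero (fun n => norm_nonneg _) hw_norm
    simpa using htto.const_mul ρ
end

section
/- Under the stated setting, suppose that zer(A + S) ≠ ∅, that u_n − x_n → 0 strongly, that e_n* → 0 strongly, that (f_n*)_{n∈ℕ} is bounded, and that there exists δ ∈ (0,1) such that for every n ∈ ℕ: ⟨u_n − y_n, f_n*⟩ ≥ −δ⟨u_n − y_n, F_n u_n − F_n y_n⟩ and ⟨a_n* + S u_n − e_n*, f_n*⟩ ≤ δ‖a_n* + S u_n − e_n*‖². For each n ∈ ℕ, let x̃_n be the unique point in H with (F_n − S) x̃_n = u_n* (such a point exists since F_n − S is strongly monotone and Lipschitzian). Then x̃_n − x_n → 0 strongly.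 -/
open Filter Topology RealInnerProductSpace

/-- From a strong-monotonicity-type inequality, a norm bound. -/
lemma aux_strong {H : Type*} [NormedAddCommGroup H] [InnerProductSpace ℝ H]
    (w v : H) {α : ℝ} (hα : 0 ≤ α) (h : α * ‖w‖ ^ 2 ≤ ⟪w, v⟫) :
    α * ‖w‖ ≤ ‖v‖ := by
  rcases eq_or_lt_of_le (norm_nonneg w) with h0 | h0
  · rw [← h0, mul_zero]; exact norm_nonneg v
  · have hle := real_inner_le_norm w v
    nlinarith only [h, h0, hle, norm_nonneg v, hα]

/-- Bound on `‖a + f‖` given an inner-product estimate on `f`. -/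
lemma aux_q {H : Type*} [NormedAddCommGroup H] [InnerProductSpace ℝ H]
    (a f : H) {δ C : ℝ} (hδ1 : δ < 1) (ha : ‖a‖ ≤ C)
    (h : ⟪a + f, f⟫ ≤ δ * ‖a + f‖ ^ 2) : (1 - δ) * ‖a + f‖ ≤ C := by
  have hinner : ⟪a + f, a + f⟫ = ⟪a + f, a⟫ + ⟪a + f, f⟫ := inner_add_right _ _ _
  have hself : ⟪a + f, a + f⟫ = ‖a + f‖ ^ 2 := real_inner_self_eq_norm_sq (a + f)
  have h1 := real_inner_le_norm (a + f) a
  have hsq : ‖a + f‖ ^ 2 ≤ ‖a + f‖ * C + δ * ‖a + f‖ ^ 2 := by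
    nlinarith only [hinner, hself, h1, h, ha, norm_nonneg (a + f), norm_nonneg a]
  rcases eq_or_lt_of_le (norm_nonneg (a + f)) with h0 | h0
  · rw [← h0, mul_zero]; exact le_trans (norm_nonneg a) ha
  · nlinarith only [hsq, h0, hδ1]

/-- With `x̃_n` the unique point satisfying `(F_n − S) x̃_n = u_n*`, one has `x̃_n − x_n → 0`. -/
theorem theorem1_xt_to_x
    {H : Type*} [NormedAddCommGroup H] [InnerProductSpace ℝ H] [CompleteSpace H]
    (A : H → Set H) (hA : IsMaximalMonotone A)
    (S : H →L[ℝ] H) (hS : ContinuousLinearMap.adjoint S = -S)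
    (ε α ρ : ℝ) (hε : ε ∈ Set.Ioo (0 : ℝ) 1) (hα : 0 < α) (hαρ : α ≤ ρ)
    (F : ℕ → H → H)
    (hFstrong : ∀ n x y, α * ‖x - y‖ ^ 2 ≤ ⟪x - y, F n x - F n y⟫)
    (hFlip : ∀ n x y, ‖F n x - F n y‖ ≤ ρ * ‖x - y‖)
    (lam : ℕ → ℝ) (hlam : ∀ n, lam n ∈ Set.Icc ε (2 - ε))
    (x u estar fstar ustar y astar ystar : ℕ → H) (π : ℕ → ℝ)
    (hustar : ∀ n, ustar n = F n (u n) - S (u n) + estar n + fstar n)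
    (hy : ∀ n, ustar n - F n (y n) ∈ A (y n))
    (hastar : ∀ n, astar n = ustar n - F n (y n))
    (hystar : ∀ n, ystar n = astar n + S (y n))
    (hπ : ∀ n, π n = ⟪x n, ystar n⟫ - ⟪y n, astar n⟫)
    (hupd_pos : ∀ n, 0 < π n →
      x (n + 1) = x n - ((lam n * π n) / ‖ystar n‖ ^ 2) • ystar n)
    (hupd_neg : ∀ n, ¬ 0 < π n → x (n + 1) = x n)
    (hzer : ∃ z, -(S z) ∈ A z)
    (hux : Filter.Tendsto (fun n => u n - x n) Filter.atTop (nhds 0))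
    (he : Filter.Tendsto estar Filter.atTop (nhds 0))
    (hf : Bornology.IsBounded (Set.range fstar))
    (hδ : ∃ δ ∈ Set.Ioo (0 : ℝ) 1, ∀ n,
      -(δ * ⟪u n - y n, F n (u n) - F n (y n)⟫) ≤ ⟪u n - y n, fstar n⟫ ∧
      ⟪astar n + S (u n) - estar n, fstar n⟫ ≤ δ * ‖astar n + S (u n) - estar n‖ ^ 2)
    (xt : ℕ → H) (hxt : ∀ n, F n (xt n) - S (xt n) = ustar n) :
    Filter.Tendsto (fun n => xt n - x n) Filter.atTop (nhds 0) := by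
  classical
  obtain ⟨z, hz⟩ := hzer
  obtain ⟨δ, hδmem, hδn⟩ := hδ
  obtain ⟨hδ0, hδ1⟩ := hδmem
  obtain ⟨hε0, hε1⟩ := hε
  have hδ1' : (0:ℝ) < 1 - δ := by linarith
  have hρ0 : (0:ℝ) < ρ := lt_of_lt_of_le hα hαρ
  set K : ℝ := (1 - δ) * α with hKdef
  have hK : 0 < K := mul_pos hδ1' hα
  set β : ℝ := ρ / (1 - δ) + ‖S‖ with hβdef
  have hβ0 : 0 ≤ β := by
    rw [hβdef]
    exact add_nonneg (div_nonneg hρ0.le hδ1'.le) (norm_nonneg _)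
  set d : ℕ → ℝ := fun n => ‖u n - y n‖ with hddef
  set c : ℕ → ℝ := fun n => ‖estar n‖ with hcdef
  set g : ℕ → ℝ := fun n => ‖u n - x n‖ with hgdef
  set T : ℕ → ℝ := fun n => if 0 < π n then π n / ‖ystar n‖ else 0 with hTdef
  set V : ℕ → ℝ := fun n => ‖x n - z‖ ^ 2 with hVdef
  -- skewness
  have hskew : ∀ w : H, ⟪w, S w⟫ = 0 := by
    intro w
    have h1 : ⟪(ContinuousLinearMap.adjoint S) w, w⟫ = ⟪w, S w⟫ :=
      ContinuousLinearMap.adjoint_inner_left S w w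
    rw [hS] at h1
    have h2 : ⟪S w, w⟫ = ⟪w, S w⟫ := real_inner_comm _ _
    simp only [ContinuousLinearMap.neg_apply, inner_neg_left] at h1
    linarith only [h1, h2]
  have hastarA : ∀ n, astar n ∈ A (y n) := fun n => (hastar n) ▸ hy n
  -- π n = ⟪x n - y n, ystar n⟫
  have hid4 : ∀ n, π n = ⟪x n - y n, ystar n⟫ := by
    intro n
    have h1 : ⟪y n, ystar n⟫ = ⟪y n, astar n⟫ := by
      rw [hystar n, inner_add_right, hskew (y n), add_zero]
    rw [hπ n, inner_sub_left, h1]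
  -- 0 ≤ ⟪y n - z, ystar n⟫
  have hyz : ∀ n, 0 ≤ ⟪y n - z, ystar n⟫ := by
    intro n
    have hmono := hA.1 (y n) z (astar n) (-(S z)) (hastarA n) hz
    have hysplit : ystar n = (astar n - -(S z)) + S (y n - z) := by
      rw [hystar n, map_sub]; abel
    rw [hysplit, inner_add_right, hskew (y n - z), add_zero]
    exact hmono
  have hxz : ∀ n, π n ≤ ⟪x n - z, ystar n⟫ := by
    intro n
    have hsplit : ⟪x n - z, ystar n⟫ = ⟪x n - y n, ystar n⟫ + ⟪y n - z, ystar n⟫ := by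
      rw [← inner_add_left]; congr 1; abel
    rw [hsplit, ← hid4 n]
    linarith only [hyz n]
  have hT0 : ∀ n, 0 ≤ T n := by
    intro n
    simp only [hTdef]
    split
    · rename_i hp
      exact div_nonneg (le_of_lt hp) (norm_nonneg _)
    · exact le_refl 0
  -- Fejér-type inequality
  have hfejer : ∀ n, V (n + 1) + ε * (2 - ε) * T n ^ 2 ≤ V n := by
    intro n
    obtain ⟨hl1, hl2⟩ := hlam n
    by_cases hπn : 0 < π n
    · have hys : ystar n ≠ 0 := by
        intro h0
        rw [hid4 n, h0, inner_zero_right] at hπn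
        exact lt_irrefl 0 hπn
      have hns : 0 < ‖ystar n‖ := norm_pos_iff.mpr hys
      have hTn : T n = π n / ‖ystar n‖ := if_pos hπn
      set μ : ℝ := lam n * π n / ‖ystar n‖ ^ 2 with hμdef
      have hμ0 : 0 ≤ μ := by
        rw [hμdef]
        have hl0 : (0:ℝ) < lam n := lt_of_lt_of_le hε0 hl1
        exact div_nonneg (mul_nonneg hl0.le hπn.le) (sq_nonneg _)
      have hstep : x (n + 1) - z = (x n - z) - μ • ystar n := by
        rw [hupd_pos n hπn, hμdef]
        abel
      have hexp : V (n + 1) = V n - 2 * μ * ⟪x n - z, ystar n⟫ + μ ^ 2 * ‖ystar n‖ ^ 2 := by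
        simp only [hVdef]
        rw [hstep, norm_sub_sq_real, real_inner_smul_right, norm_smul, mul_pow,
          Real.norm_eq_abs, sq_abs]
        ring
      have h1 : 2 * μ * π n ≤ 2 * μ * ⟪x n - z, ystar n⟫ :=
        mul_le_mul_of_nonneg_left (hxz n) (by linarith only [hμ0])
      have hkey : 2 * μ * π n - μ ^ 2 * ‖ystar n‖ ^ 2
          = (2 * lam n - lam n ^ 2) * (π n / ‖ystar n‖) ^ 2 := by
        rw [hμdef]
        field_simp
      have h2 : ε * (2 - ε) * (π n / ‖ystar n‖) ^ 2
          ≤ (2 * lam n - lam n ^ 2) * (π n / ‖ystar n‖) ^ 2 := by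
        have hfac : 0 ≤ (lam n - ε) * (2 - ε - lam n) :=
          mul_nonneg (by linarith only [hl1]) (by linarith only [hl2])
        nlinarith only [hfac, sq_nonneg (π n / ‖ystar n‖)]
      rw [hTn, hexp]
      linarith only [h1, hkey, h2]
    · have hTn : T n = 0 := if_neg hπn
      simp only [hVdef, hTn]
      rw [hupd_neg n hπn]
      simp
  have hεε : (0:ℝ) < ε * (2 - ε) := by nlinarith only [hε0, hε1]
  have hant : Antitone V := by
    apply antitone_nat_of_succ_le
    intro n
    have h1 := hfejer n
    have h2 : 0 ≤ ε * (2 - ε) * T n ^ 2 := mul_nonneg hεε.le (sq_nonneg _)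
    linarith only [h1, h2]
  have hbdd : BddBelow (Set.range V) := by
    refine ⟨0, ?_⟩
    rintro v ⟨n, rfl⟩
    simp only [hVdef]
    positivity
  have hVconv : Tendsto V atTop (nhds (⨅ i, V i)) := tendsto_atTop_ciInf hant hbdd
  have hVdiff : Tendsto (fun n => V n - V (n + 1)) atTop (nhds 0) := by
    have h1 : Tendsto (fun n => V (n + 1)) atTop (nhds (⨅ i, V i)) :=
      hVconv.comp (tendsto_add_atTop_nat 1)
    simpa using hVconv.sub h1
  have hT2 : Tendsto (fun n => T n ^ 2) atTop (nhds 0) := by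
    apply squeeze_zero (fun n => sq_nonneg _) (g := fun n => (V n - V (n + 1)) / (ε * (2 - ε)))
    · intro n
      rw [le_div_iff₀ hεε]
      linarith only [hfejer n]
    · have h2 := hVdiff.div_const (ε * (2 - ε))
      rw [zero_div] at h2
      exact h2
  have hT : Tendsto T atTop (nhds 0) := by
    have h1 := hT2.sqrt
    rw [Real.sqrt_zero] at h1
    convert h1 using 1
    funext n
    exact (Real.sqrt_sq (hT0 n)).symm
  -- limits of c and g
  have hc : Tendsto c atTop (nhds 0) := by simpa [hcdef] using he.norm
  have hg : Tendsto g atTop (nhds 0) := by simpa [hgdef] using hux.norm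
  -- identity: astar n + S (u n) - estar n = (F u - F y) + fstar
  have hid2 : ∀ n, astar n + S (u n) - estar n
      = (F n (u n) - F n (y n)) + fstar n := by
    intro n
    rw [hastar n, hustar n]
    abel
  -- bound on ‖(F u - F y) + fstar‖
  have hQ : ∀ n, (1 - δ) * ‖(F n (u n) - F n (y n)) + fstar n‖ ≤ ρ * d n := by
    intro n
    have h2 := (hδn n).2
    rw [hid2 n] at h2
    exact aux_q _ _ hδ1 (hFlip n (u n) (y n)) h2
  -- bound on ystar
  have hid3 : ∀ n, ystar n = ((F n (u n) - F n (y n)) + fstar n) - S (u n - y n) + estar n := by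
    intro n
    rw [hystar n, hastar n, hustar n, map_sub]
    abel
  have hYb : ∀ n, ‖ystar n‖ ≤ β * d n + c n := by
    intro n
    rw [hid3 n]
    have ha := norm_add_le (((F n (u n) - F n (y n)) + fstar n) - S (u n - y n)) (estar n)
    have hb := norm_sub_le ((F n (u n) - F n (y n)) + fstar n) (S (u n - y n))
    have h2 : ‖S (u n - y n)‖ ≤ ‖S‖ * d n := S.le_opNorm _
    have h3 : ‖(F n (u n) - F n (y n)) + fstar n‖ ≤ ρ / (1 - δ) * d n := by
      rw [div_mul_eq_mul_div, le_div_iff₀ hδ1']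
      linarith only [hQ n]
    have h4 : β * d n = ρ / (1 - δ) * d n + ‖S‖ * d n := by rw [hβdef]; ring
    have h5 : c n = ‖estar n‖ := by rw [hcdef]
    rw [h4, h5]
    linarith only [ha, hb, h2, h3]
  -- lower bound on π
  have hπlb : ∀ n, K * d n ^ 2 - d n * c n - g n * ‖ystar n‖ ≤ π n := by
    intro n
    have hsplit : π n = ⟪x n - u n, ystar n⟫ + ⟪u n - y n, ystar n⟫ := by
      rw [hid4 n, ← inner_add_left]
      congr 1
      abel
    have h1 : -(g n * ‖ystar n‖) ≤ ⟪x n - u n, ystar n⟫ := by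
      have habs := (abs_le.mp (abs_real_inner_le_norm (x n - u n) (ystar n))).1
      rw [norm_sub_rev] at habs
      exact habs
    have h2 : K * d n ^ 2 - d n * c n ≤ ⟪u n - y n, ystar n⟫ := by
      have hys : ⟪u n - y n, ystar n⟫
          = ⟪u n - y n, F n (u n) - F n (y n)⟫ + ⟪u n - y n, fstar n⟫
            + ⟪u n - y n, estar n⟫ := by
        rw [hid3 n, inner_add_right, inner_sub_right, inner_add_right, hskew (u n - y n)]
        ring
      have hd1 := (hδn n).1
      have hstr := hFstrong n (u n) (y n)
      have he1 : -(d n * c n) ≤ ⟪u n - y n, estar n⟫ :=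
        (abs_le.mp (abs_real_inner_le_norm (u n - y n) (estar n))).1
      have hmul := mul_le_mul_of_nonneg_left hstr hδ1'.le
      have hdd : d n = ‖u n - y n‖ := by rw [hddef]
      rw [hys, hKdef, hdd]
      linarith only [hmul, hd1, he1]
    linarith only [h1, h2, hsplit.ge, hsplit.le]
  -- π n ≤ T n * ‖ystar n‖
  have hπT : ∀ n, π n ≤ T n * ‖ystar n‖ := by
    intro n
    by_cases hπn : 0 < π n
    · have hys : ystar n ≠ 0 := by
        intro h0
        rw [hid4 n, h0, inner_zero_right] at hπn
        exact lt_irrefl 0 hπn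
      have hns : ‖ystar n‖ ≠ 0 := norm_ne_zero_iff.mpr hys
      have hTn : T n = π n / ‖ystar n‖ := if_pos hπn
      rw [hTn, div_mul_cancel₀ _ hns]
    · have hTn : T n = 0 := if_neg hπn
      rw [hTn, zero_mul]
      linarith only [not_lt.mp hπn]
  -- key quadratic bound
  set s : ℕ → ℝ := fun n => c n + β * (T n + g n) with hsdef
  set r : ℕ → ℝ := fun n => c n * (T n + g n) with hrdef
  have hquad : ∀ n, K * d n ^ 2 ≤ s n * d n + r n := by
    intro n
    have hTg : 0 ≤ T n + g n := add_nonneg (hT0 n) (norm_nonneg _)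
    have h4 : (T n + g n) * ‖ystar n‖ ≤ (T n + g n) * (β * d n + c n) :=
      mul_le_mul_of_nonneg_left (hYb n) hTg
    have h5 : K * d n ^ 2 ≤ d n * c n + (T n + g n) * ‖ystar n‖ := by
      linarith only [hπlb n, hπT n]
    have h6 : s n = c n + β * (T n + g n) := by rw [hsdef]
    have h7 : r n = c n * (T n + g n) := by rw [hrdef]
    rw [h6, h7]
    linarith only [h4, h5]
  have hd2b : ∀ n, d n ^ 2 ≤ (s n ^ 2 + 2 * K * r n) / K ^ 2 := by
    intro n
    rw [le_div_iff₀ (pow_pos hK 2)]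
    have hm : (2 * K) * (K * d n ^ 2) ≤ (2 * K) * (s n * d n + r n) :=
      mul_le_mul_of_nonneg_left (hquad n) (by linarith only [hK])
    linarith only [hm, sq_nonneg (K * d n - s n)]
  -- limits
  have hTg0 : Tendsto (fun n => T n + g n) atTop (nhds 0) := by simpa using hT.add hg
  have hs0 : Tendsto s atTop (nhds 0) := by
    have h1 := hc.add (hTg0.const_mul β)
    rw [hsdef]
    simpa using h1
  have hr0 : Tendsto r atTop (nhds 0) := by
    have h1 := hc.mul hTg0
    rw [hrdef]
    simpa using h1
  have hB0 : Tendsto (fun n => (s n ^ 2 + 2 * K * r n) / K ^ 2) atTop (nhds 0) := by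
    have h1 : Tendsto (fun n => s n ^ 2 + 2 * K * r n) atTop (nhds 0) := by
      have h2 := (hs0.mul hs0).add (hr0.const_mul (2 * K))
      simpa [sq] using h2
    have h3 := h1.div_const (K ^ 2)
    rw [zero_div] at h3
    exact h3
  have hd2 : Tendsto (fun n => d n ^ 2) atTop (nhds 0) :=
    squeeze_zero (fun n => sq_nonneg _) hd2b hB0
  have hd0 : Tendsto d atTop (nhds 0) := by
    have h1 := hd2.sqrt
    rw [Real.sqrt_zero] at h1
    convert h1 using 1
    funext n
    exact (Real.sqrt_sq (norm_nonneg _)).symm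
  have huy : Tendsto (fun n => u n - y n) atTop (nhds 0) :=
    tendsto_zero_iff_norm_tendsto_zero.mpr hd0
  -- xt n - y n → 0
  have hxty : ∀ n, α * ‖xt n - y n‖ ≤ ‖ystar n‖ := by
    intro n
    apply aux_strong _ _ (le_of_lt hα)
    have hysid : ystar n = (F n (xt n) - F n (y n)) - S (xt n - y n) := by
      rw [hystar n, hastar n, ← hxt n, map_sub]
      abel
    have h1 : ⟪xt n - y n, ystar n⟫ = ⟪xt n - y n, F n (xt n) - F n (y n)⟫ := by
      rw [hysid, inner_sub_right, hskew (xt n - y n), sub_zero]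
    rw [h1]
    exact hFstrong n (xt n) (y n)
  have hxtyn : Tendsto (fun n => ‖xt n - y n‖) atTop (nhds 0) := by
    apply squeeze_zero (fun n => norm_nonneg _) (g := fun n => (β * d n + c n) / α)
    · intro n
      rw [le_div_iff₀ hα]
      linarith only [hxty n, hYb n]
    · have h1 : Tendsto (fun n => β * d n + c n) atTop (nhds 0) := by
        have h2 := (hd0.const_mul β).add hc
        simpa using h2
      have h3 := h1.div_const α
      rw [zero_div] at h3
      exact h3
  have hxy : Tendsto (fun n => xt n - y n) atTop (nhds 0) :=
    tendsto_zero_iff_norm_tendsto_zero.mpr hxtyn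
  have hsum : Tendsto (fun n => (xt n - y n) + -(u n - y n) + (u n - x n)) atTop (nhds 0) := by
    simpa using (hxy.add huy.neg).add hux
  exact hsum.congr (fun n => by abel)
end
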